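/- arXiv:2506.06209 — 4 statements merged into one kernel-verified Lean document; each statement's English description precedes it below -/
import Mathlib

section
/- Let I be a monomial ideal with minimal generating set {m1, m2, m3} such that m3 divides lcm(m1, m2). Then reg(I) = max{ deg lcm(m1, m3), deg lcm(m2, m3) } − 1. -/
/-!
Two minimal homogeneous generating systems of the same graded submodule of a graded free module
over `MvPolynomial σ R` are related by graded transition matrices. By minimality the constant
parts of both composite transitions are identity matrices, so the composites are invertible
(block unipotent for the order by degree). Hence the two systems have the same number of elements
in each degree, and the transition carries the syzygies of one onto those of the other.

Apply this to `F.gen` and `x^m1, x^m2, x^m3`, and then to the columns of `F.d 0` and the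
syzygies of the monomials. Because `m3 ≤ m1 ⊔ m2`, these syzygies form a free module on the two
binomial syzygies through `x^m3`, of degrees `deg (m1 ⊔ m3)` and `deg (m2 ⊔ m3)`. So `F` has length
one, with twists `deg mᵢ` in homological degree 0 and those two degrees in homological degree 1;
incomparability makes each `deg mᵢ` smaller than their maximum, which thus determines `reg I`.
-/

open MvPolynomial

/-- A minimal graded free resolution of an ideal `I` in a polynomial ring:
ranks `rank i`, twists `deg i b` for the basis elements, homogeneous generators `gen`
mapping onto `I`, and differentials given by matrices with homogeneous entries lying
in the irrelevant maximal ideal (minimality), forming an exact complex. -/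
structure MinGradedFreeRes {K : Type*} [Field K] {σ : Type*}
    (I : Ideal (MvPolynomial σ K)) where
  rank : ℕ → ℕ
  deg : (i : ℕ) → Fin (rank i) → ℕ
  gen : Fin (rank 0) → MvPolynomial σ K
  genHom : ∀ b, (gen b).IsHomogeneous (deg 0 b)
  d : (i : ℕ) → Matrix (Fin (rank i)) (Fin (rank (i + 1))) (MvPolynomial σ K)
  dHom : ∀ i a b, d i a b = 0 ∨ (d i a b).IsHomogeneous (deg (i + 1) b - deg i a)
  dMinimal : ∀ i a b, MvPolynomial.coeff 0 (d i a b) = 0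
  aug_range : LinearMap.range (∑ b, (LinearMap.proj b).smulRight (gen b) :
      (Fin (rank 0) → MvPolynomial σ K) →ₗ[MvPolynomial σ K] MvPolynomial σ K) = I
  exact_aug : LinearMap.range (Matrix.mulVecLin (d 0)) =
      LinearMap.ker (∑ b, (LinearMap.proj b).smulRight (gen b) :
        (Fin (rank 0) → MvPolynomial σ K) →ₗ[MvPolynomial σ K] MvPolynomial σ K)
  exact : ∀ i, LinearMap.range (Matrix.mulVecLin (d (i + 1))) =
      LinearMap.ker (Matrix.mulVecLin (d i))

/-- The set of numbers `j - i` such that the graded Betti number `β_{i,j} ≠ 0`, read off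
from a minimal graded free resolution; the Castelnuovo–Mumford regularity of the ideal
is the greatest element of this set. -/
def MinGradedFreeRes.regSet {K : Type*} [Field K] {σ : Type*} {I : Ideal (MvPolynomial σ K)}
    (F : MinGradedFreeRes I) : Set ℤ :=
  {r : ℤ | ∃ (i : ℕ) (b : Fin (F.rank i)), r = (F.deg i b : ℤ) - (i : ℤ)}

/-- An ideal has `n`-linear resolution if it is zero or admits a minimal graded free
resolution whose `i`-th twists are all equal to `n + i`. -/
def HasLinearResolution {K : Type*} [Field K] {σ : Type*}
    (I : Ideal (MvPolynomial σ K)) (n : ℕ) : Prop :=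
  I = ⊥ ∨ ∃ F : MinGradedFreeRes I, ∀ (i : ℕ) (b : Fin (F.rank i)), F.deg i b = n + i

open Matrix

section Generalities

variable {S : Type*} [CommRing S] {ι κ κ' ν β : Type*}

lemma Fintype.exists_eq_of_card_fiber_eq [Fintype κ] [Fintype κ'] [DecidableEq β] {e : κ → β}
    {e' : κ' → β} (h : ∀ j, Fintype.card {k // e k = j} = Fintype.card {k' // e' k' = j})
    (k : κ) : ∃ k', e' k' = e k := by
  have hpos : 0 < Fintype.card {k' // e' k' = e k} :=
    h (e k) ▸ Fintype.card_pos_iff.mpr ⟨⟨k, rfl⟩⟩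
  obtain ⟨⟨k', hk'⟩⟩ := Fintype.card_pos_iff.mp hpos
  exact ⟨k', hk'⟩

lemma Finsupp.degree_lt_degree {σ : Type*} {u v : σ →₀ ℕ} (h : u < v) :
    u.degree < v.degree := by
  have hsum := map_add Finsupp.degree (v - u) u
  rw [tsub_add_cancel_of_le h.le] at hsum
  have hpos : (v - u).degree ≠ 0 := by
    rw [Ne, Finsupp.degree_eq_zero_iff, tsub_eq_zero_iff_le]
    exact h.not_ge
  omega

lemma sum_proj_smulRight_eq_linearCombination [Fintype κ] (g : κ → S) :
    (∑ k, (LinearMap.proj k).smulRight (g k) : (κ → S) →ₗ[S] S) =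
      Fintype.linearCombination S g := by
  ext f
  simp [Fintype.linearCombination_apply]

namespace Matrix

lemma submatrix_fiber_mul_eq_one [Fintype κ'] [DecidableEq κ] [DecidableEq β]
    {P : Matrix κ κ' S} {Q : Matrix κ' κ S} {e : κ → β} {e' : κ' → β}
    (hP : ∀ k k', e' k' ≠ e k → P k k' = 0) (hPQ : P * Q = 1) (j : β) :
    P.submatrix (Subtype.val : {k // e k = j} → κ) (Subtype.val : {k' // e' k' = j} → κ') *
      Q.submatrix (Subtype.val : {k' // e' k' = j} → κ') (Subtype.val : {k // e k = j} → κ)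
      = 1 := by
  ext a b
  have hsum : ∑ k' : {k' // e' k' = j}, P a k' * Q k' b = (P * Q) a b := by
    rw [← Finset.sum_subtype _ (fun _ => Finset.mem_filter_univ _) fun k' => P a k' * Q k' b,
      Finset.sum_filter_of_ne, mul_apply]
    intro k' _ hk'
    by_contra hne
    exact left_ne_zero_of_mul hk' (hP a k' (by rw [a.2]; exact hne))
  simp only [mul_apply, submatrix_apply]
  rw [hsum, hPQ, one_apply, one_apply]
  exact if_congr Subtype.ext_iff.symm rfl rfl

lemma card_fiber_eq_of_mul_eq_one [Nontrivial S] [Fintype κ] [Fintype κ'] [DecidableEq κ]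
    [DecidableEq κ'] [DecidableEq β] {P : Matrix κ κ' S} {Q : Matrix κ' κ S} {e : κ → β}
    {e' : κ' → β} (hP : ∀ k k', e' k' ≠ e k → P k k' = 0)
    (hQ : ∀ k' k, e k ≠ e' k' → Q k' k = 0) (hPQ : P * Q = 1) (hQP : Q * P = 1) (j : β) :
    Fintype.card {k // e k = j} = Fintype.card {k' // e' k' = j} := by
  have hPQj := congrArg mulVecLin (submatrix_fiber_mul_eq_one hP hPQ j)
  have hQPj := congrArg mulVecLin (submatrix_fiber_mul_eq_one hQ hQP j)
  rw [mulVecLin_mul, mulVecLin_one] at hPQj hQPj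
  simpa using (LinearEquiv.ofLinearMap _ _ hPQj hQPj).finrank_eq.symm

lemma vecMul_bijective_of_isUnit_mul [Fintype κ] [Fintype κ'] [DecidableEq κ] [DecidableEq κ']
    {P : Matrix κ κ' S} {Q : Matrix κ' κ S} (hPQ : IsUnit (P * Q)) (hQP : IsUnit (Q * P)) :
    Function.Bijective (· ᵥ* P) := by
  refine ⟨fun x y hxy => vecMul_injective_of_isUnit hPQ ?_, fun z => ?_⟩
  · simp only [← vecMul_vecMul, hxy]
  · obtain ⟨w, rfl⟩ := vecMul_surjective_iff_isUnit.mpr hQP z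
    exact ⟨w ᵥ* Q, vecMul_vecMul w Q P⟩

lemma span_range_mul_eq_ker [Fintype κ] [Fintype κ'] {C : Matrix ν κ S} {P : Matrix κ κ' S}
    {W : Matrix κ' ι S} (hP : Function.Surjective (· ᵥ* P))
    (hC : Submodule.span S (Set.range C) = LinearMap.ker (P * W).vecMulLinear) :
    Submodule.span S (Set.range (C * P)) = LinearMap.ker W.vecMulLinear := by
  have hrange : Set.range (C * P) = P.vecMulLinear '' Set.range C :=
    Set.range_comp (g := P.vecMulLinear) (f := C)
  have hker : LinearMap.ker (P * W).vecMulLinear =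
      (LinearMap.ker W.vecMulLinear).comap P.vecMulLinear := by
    ext x
    simp [vecMul_vecMul]
  rw [hrange, Submodule.span_image, hC, hker, Submodule.map_comap_eq_of_surjective hP]

variable [Fintype κ]

lemma vecMul_replicateCol_unit (f g : κ → S) : f ᵥ* replicateCol Unit g = fun _ => f ⬝ᵥ g :=
  rfl

lemma span_range_replicateCol_unit (g : κ → S) :
    Submodule.span S (Set.range (replicateCol Unit g)) =
      Submodule.comap (LinearMap.proj ()) (Ideal.span (Set.range g)) := by
  ext y
  change y ∈ Submodule.span S (Set.range (replicateCol Unit g).row) ↔ _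
  rw [← range_vecMulLinear, Submodule.mem_comap, Ideal.span,
    ← Fintype.range_linearCombination]
  constructor
  · rintro ⟨f, rfl⟩
    exact ⟨f, by simp [Fintype.linearCombination_apply, vecMul_replicateCol_unit, dotProduct]⟩
  · rintro ⟨f, hf⟩
    refine ⟨f, funext fun u => ?_⟩
    simpa [Fintype.linearCombination_apply, vecMul_replicateCol_unit, dotProduct] using hf

lemma ker_vecMulLinear_replicateCol_unit (g : κ → S) :
    LinearMap.ker (replicateCol Unit g).vecMulLinear =
      LinearMap.ker (Fintype.linearCombination S g) := by
  ext f
  simp [vecMul_replicateCol_unit, funext_iff, Fintype.linearCombination_apply, dotProduct]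

end Matrix

end Generalities

namespace MvPolynomial

variable {R : Type*} [CommRing R] {σ ι κ κ' ν : Type*}

lemma eq_C_constantCoeff_of_isHomogeneous_zero {p : MvPolynomial σ R} (h : p.IsHomogeneous 0) :
    p = C (constantCoeff p) :=
  totalDegree_eq_zero_iff_eq_C.mp ((totalDegree_zero_iff_isHomogeneous σ).mpr h)

lemma IsHomogeneous.constantCoeff_eq_zero {p : MvPolynomial σ R} {n : ℕ}
    (h : p.IsHomogeneous n) (hn : n ≠ 0) : constantCoeff p = 0 := by
  rw [constantCoeff_eq]
  exact h.coeff_eq_zero (by simpa using Ne.symm hn)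

section

attribute [local instance] MvPolynomial.gradedAlgebra

lemma homogeneousComponent_mul_of_isHomogeneous {f g : MvPolynomial σ R} {e : ℕ}
    (hg : g.IsHomogeneous e) (n : ℕ) :
    homogeneousComponent n (f * g) =
      if e ≤ n then homogeneousComponent (n - e) f * g else 0 := by
  rw [← decomposition.decompose'_apply]
  split_ifs with h
  · rw [← decomposition.decompose'_apply]
    exact DirectSum.coe_decompose_mul_of_right_mem_of_le (homogeneousSubmodule σ R) hg h
  · exact DirectSum.coe_decompose_mul_of_right_mem_of_not_le (homogeneousSubmodule σ R) hg h

end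

/-- `v` is homogeneous of degree `d` in the graded free module `⊕ᵢ A(-t i)`,
`A = MvPolynomial σ R`. -/
def IsHomogeneousVec (t : ι → ℕ) (d : ℕ) (v : ι → MvPolynomial σ R) : Prop :=
  ∀ i, v i = 0 ∨ (t i ≤ d ∧ (v i).IsHomogeneous (d - t i))

def IsGradedMatrix (e : κ → ℕ) (t : ι → ℕ) (M : Matrix κ ι (MvPolynomial σ R)) : Prop :=
  ∀ k, IsHomogeneousVec t (e k) (M k)

/-- The rows of `W` form a minimal generating system of their span: no relation among them
has a unit coefficient. -/
def IsMinimalRows [Fintype κ] (W : Matrix κ ι (MvPolynomial σ R)) : Prop :=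
  ∀ f : κ → MvPolynomial σ R, f ᵥ* W = 0 → ∀ k, constantCoeff (f k) = 0

noncomputable def homogeneousComponentVec (t : ι → ℕ) (d : ℕ) :
    (ι → MvPolynomial σ R) →ₗ[R] ι → MvPolynomial σ R :=
  LinearMap.pi fun i => if t i ≤ d then (homogeneousComponent (d - t i)).comp (LinearMap.proj i)
    else 0

lemma homogeneousComponentVec_apply (t : ι → ℕ) (d : ℕ) (v : ι → MvPolynomial σ R) (i : ι) :
    homogeneousComponentVec t d v i =
      if t i ≤ d then homogeneousComponent (d - t i) (v i) else 0 := by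
  simp only [homogeneousComponentVec, LinearMap.pi_apply]
  split_ifs <;> rfl

lemma isHomogeneousVec_homogeneousComponentVec (t : ι → ℕ) (d : ℕ)
    (v : ι → MvPolynomial σ R) : IsHomogeneousVec t d (homogeneousComponentVec t d v) := by
  intro i
  rw [homogeneousComponentVec_apply]
  split_ifs with h
  · exact Or.inr ⟨h, homogeneousComponent_isHomogeneous _ _⟩
  · exact Or.inl rfl

lemma isHomogeneousVec_iff {t : ι → ℕ} {d : ℕ} {v : ι → MvPolynomial σ R} :
    IsHomogeneousVec t d v ↔ homogeneousComponentVec t d v = v := by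
  refine ⟨fun hv => ?_, fun hv => hv ▸ isHomogeneousVec_homogeneousComponentVec t d v⟩
  ext i
  rw [homogeneousComponentVec_apply]
  rcases hv i with h0 | ⟨hle, hhom⟩
  · simp [h0]
  · rw [if_pos hle, homogeneousComponent_of_mem hhom, if_pos rfl]

lemma isGradedMatrix_replicateCol {e : κ → ℕ} {g : κ → MvPolynomial σ R}
    (hg : ∀ k, (g k).IsHomogeneous (e k)) : IsGradedMatrix e 0 (replicateCol Unit g) :=
  fun k _ => Or.inr ⟨Nat.zero_le _, by simpa using hg k⟩

lemma IsGradedMatrix.eq_C_of_eq {e : κ → ℕ} {e' : κ' → ℕ} {P : Matrix κ κ' (MvPolynomial σ R)}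
    (hP : IsGradedMatrix e e' P) {k : κ} {k' : κ'} (h : e' k' = e k) :
    P k k' = C (constantCoeff (P k k')) := by
  rcases hP k k' with h0 | ⟨-, hhom⟩
  · simp [h0]
  · rw [h, Nat.sub_self] at hhom
    exact eq_C_constantCoeff_of_isHomogeneous_zero hhom

lemma IsGradedMatrix.constantCoeff_eq_zero {e : κ → ℕ} {e' : κ' → ℕ}
    {P : Matrix κ κ' (MvPolynomial σ R)} (hP : IsGradedMatrix e e' P) {k : κ} {k' : κ'}
    (h : e' k' ≠ e k) : constantCoeff (P k k') = 0 := by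
  rcases hP k k' with h0 | ⟨hle, hhom⟩
  · simp [h0]
  · exact hhom.constantCoeff_eq_zero (by omega)

variable [Fintype κ]

lemma homogeneousComponentVec_vecMul {e : κ → ℕ} {t : ι → ℕ}
    {W : Matrix κ ι (MvPolynomial σ R)} (hW : IsGradedMatrix e t W) (d : ℕ)
    (p : κ → MvPolynomial σ R) :
    homogeneousComponentVec t d (p ᵥ* W) = homogeneousComponentVec e d p ᵥ* W := by
  funext i
  simp only [homogeneousComponentVec_apply, vecMul, dotProduct]
  by_cases hid : t i ≤ d
  · rw [if_pos hid, map_sum]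
    refine Finset.sum_congr rfl fun k _ => ?_
    rcases hW k i with h0 | ⟨hle, hhom⟩
    · simp [h0]
    rw [homogeneousComponent_mul_of_isHomogeneous hhom]
    by_cases hkd : e k ≤ d
    · rw [if_pos (by omega), if_pos hkd, (by omega : d - t i - (e k - t i) = d - e k)]
    · rw [if_neg (by omega), if_neg hkd, zero_mul]
  · rw [if_neg hid]
    refine (Finset.sum_eq_zero fun k _ => ?_).symm
    rcases hW k i with h0 | ⟨hle, -⟩
    · simp [h0]
    · rw [if_neg (by omega), zero_mul]

lemma IsHomogeneousVec.vecMul {e : κ → ℕ} {t : ι → ℕ} {d : ℕ} {p : κ → MvPolynomial σ R}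
    {W : Matrix κ ι (MvPolynomial σ R)} (hp : IsHomogeneousVec e d p)
    (hW : IsGradedMatrix e t W) : IsHomogeneousVec t d (p ᵥ* W) := by
  rw [isHomogeneousVec_iff] at hp ⊢
  rw [homogeneousComponentVec_vecMul hW, hp]

lemma IsGradedMatrix.mul {e' : κ' → ℕ} {e : κ → ℕ} {t : ι → ℕ}
    {P : Matrix κ' κ (MvPolynomial σ R)} {W : Matrix κ ι (MvPolynomial σ R)}
    (hP : IsGradedMatrix e' e P) (hW : IsGradedMatrix e t W) : IsGradedMatrix e' t (P * W) :=
  fun k => IsHomogeneousVec.vecMul (hP k) hW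

lemma IsGradedMatrix.exists_mul_eq {e : κ → ℕ} {e' : κ' → ℕ} {t : ι → ℕ}
    {W : Matrix κ ι (MvPolynomial σ R)} {V : Matrix κ' ι (MvPolynomial σ R)}
    (hW : IsGradedMatrix e t W) (hV : IsGradedMatrix e' t V)
    (h : Submodule.span (MvPolynomial σ R) (Set.range V) ≤
      Submodule.span (MvPolynomial σ R) (Set.range W)) :
    ∃ P : Matrix κ' κ (MvPolynomial σ R), IsGradedMatrix e' e P ∧ P * W = V := by
  have hrow : ∀ k', ∃ p, IsHomogeneousVec e (e' k') p ∧ p ᵥ* W = V k' := by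
    intro k'
    obtain ⟨p, hp⟩ : V k' ∈ LinearMap.range W.vecMulLinear := by
      rw [range_vecMulLinear]
      exact h (Submodule.subset_span ⟨k', rfl⟩)
    refine ⟨_, isHomogeneousVec_homogeneousComponentVec e (e' k') p, ?_⟩
    rw [← homogeneousComponentVec_vecMul hW, ← vecMulLinear_apply, hp,
      isHomogeneousVec_iff.mp (hV k')]
  choose P hP hPW using hrow
  exact ⟨P, hP, _root_.funext hPW⟩

lemma IsGradedMatrix.isUnit [DecidableEq κ] {e : κ → ℕ} {M : Matrix κ κ (MvPolynomial σ R)}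
    (hM : IsGradedMatrix e e M) (h1 : M.map constantCoeff = 1) : IsUnit M := by
  have htri : M.BlockTriangular (OrderDual.toDual ∘ e) := by
    intro a b hab
    rcases hM a b with h0 | ⟨hle, -⟩
    · exact h0
    · exact absurd hab (not_lt.mpr hle)
  have hblock : ∀ a, M.toSquareBlock (OrderDual.toDual ∘ e) a = 1 := by
    intro a
    rw [toSquareBlock, toSquareBlockProp, ← toBlock_one_self]
    ext i j
    rw [toBlock_apply, toBlock_apply, hM.eq_C_of_eq (j.2.trans i.2.symm),
      ← map_apply (f := ⇑constantCoeff), h1, one_apply, one_apply]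
    split_ifs <;> simp
  rw [isUnit_iff_isUnit_det, htri.det, Finset.prod_eq_one fun a _ => by rw [hblock, det_one]]
  exact isUnit_one

lemma IsMinimalRows.map_constantCoeff_eq_one [DecidableEq κ]
    {W : Matrix κ ι (MvPolynomial σ R)} (hW : IsMinimalRows W)
    {M : Matrix κ κ (MvPolynomial σ R)} (h : M * W = W) : M.map constantCoeff = 1 := by
  have h0 : (M - 1).map constantCoeff = 0 := by
    ext a b
    refine hW ((M - 1) a) ?_ b
    rw [← mul_apply_eq_vecMul, Matrix.sub_mul, Matrix.one_mul, h, sub_self]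
    rfl
  rwa [Matrix.map_sub _ (map_sub _), Matrix.map_one _ (map_zero _) (map_one _), sub_eq_zero] at h0

lemma isMinimalRows_of_injective {W : Matrix κ ι (MvPolynomial σ R)}
    (h : Function.Injective (· ᵥ* W)) : IsMinimalRows W := fun f hf k => by
  rw [h (hf.trans (zero_vecMul W).symm)]
  exact map_zero _

lemma IsMinimalRows.mul [Fintype ν] {C : Matrix ν κ (MvPolynomial σ R)}
    {P : Matrix κ κ' (MvPolynomial σ R)} (hC : IsMinimalRows C)
    (hP : Function.Injective (· ᵥ* P)) : IsMinimalRows (C * P) := fun f hf =>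
  hC f (hP (show f ᵥ* C ᵥ* P = 0 ᵥ* P by rw [vecMul_vecMul, hf, zero_vecMul]))

section Transition

variable [Fintype κ'] {e : κ → ℕ} {e' : κ' → ℕ} {t : ι → ℕ}
  {W : Matrix κ ι (MvPolynomial σ R)} {W' : Matrix κ' ι (MvPolynomial σ R)}
  (hW : IsGradedMatrix e t W) (hW' : IsGradedMatrix e' t W')
  (hspan : Submodule.span (MvPolynomial σ R) (Set.range W) =
    Submodule.span (MvPolynomial σ R) (Set.range W'))
include hW hW' hspan

theorem exists_transition_of_span_eq [DecidableEq κ] [DecidableEq κ'] (hmin : IsMinimalRows W)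
    (hmin' : IsMinimalRows W') :
    ∃ (P : Matrix κ κ' (MvPolynomial σ R)) (Q : Matrix κ' κ (MvPolynomial σ R)),
      IsGradedMatrix e e' P ∧ IsGradedMatrix e' e Q ∧ P * W' = W ∧ Q * W = W' ∧
      (P * Q).map constantCoeff = 1 ∧ (Q * P).map constantCoeff = 1 := by
  obtain ⟨P, hP, hPW⟩ := hW'.exists_mul_eq hW hspan.le
  obtain ⟨Q, hQ, hQW⟩ := hW.exists_mul_eq hW' hspan.ge
  refine ⟨P, Q, hP, hQ, hPW, hQW, hmin.map_constantCoeff_eq_one ?_,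
    hmin'.map_constantCoeff_eq_one ?_⟩
  · rw [Matrix.mul_assoc, hQW, hPW]
  · rw [Matrix.mul_assoc, hPW, hQW]

theorem card_fiber_eq_of_span_eq [Nontrivial R] (hmin : IsMinimalRows W)
    (hmin' : IsMinimalRows W') (j : ℕ) :
    Fintype.card {k // e k = j} = Fintype.card {k' // e' k' = j} := by
  classical
  obtain ⟨P, Q, hP, hQ, -, -, hPQ, hQP⟩ := exists_transition_of_span_eq hW hW' hspan hmin hmin'
  rw [Matrix.map_mul] at hPQ hQP
  -- the constant parts of the transition matrices are mutually inverse and block diagonal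
  exact card_fiber_eq_of_mul_eq_one (e := e) (e' := e') (fun _ _ h => hP.constantCoeff_eq_zero h)
    (fun _ _ h => hQ.constantCoeff_eq_zero h) hPQ hQP j

theorem exists_vecMul_bijective_of_span_eq (hmin : IsMinimalRows W)
    (hmin' : IsMinimalRows W') :
    ∃ P : Matrix κ κ' (MvPolynomial σ R),
      IsGradedMatrix e e' P ∧ P * W' = W ∧ Function.Bijective (· ᵥ* P) := by
  classical
  obtain ⟨P, Q, hP, hQ, hPW, -, hPQ, hQP⟩ := exists_transition_of_span_eq hW hW' hspan hmin hmin'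
  exact ⟨P, hP, hPW,
    vecMul_bijective_of_isUnit_mul ((hP.mul hQ).isUnit hPQ) ((hQ.mul hP).isUnit hQP)⟩

theorem vecMul_injective_of_span_eq (hmin : IsMinimalRows W)
    (hinj : Function.Injective (· ᵥ* W')) : Function.Injective (· ᵥ* W) := by
  obtain ⟨P, -, rfl, hP⟩ :=
    exists_vecMul_bijective_of_span_eq hW hW' hspan hmin (isMinimalRows_of_injective hinj)
  exact fun x y h => hP.1 (hinj (by simpa only [vecMul_vecMul] using h))

end Transition

end MvPolynomial


namespace MvPolynomial

variable {R : Type*} [CommRing R] {σ : Type*}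

lemma monomial_tsub_mul_monomial {u v : σ →₀ ℕ} (h : v ≤ u) :
    monomial (u - v) (1 : R) * monomial v 1 = monomial u 1 := by
  rw [monomial_mul, tsub_add_cancel_of_le h, one_mul]

lemma isHomogeneous_monomial_tsub {u v : σ →₀ ℕ} (h : v ≤ u) (c : R) :
    (monomial (u - v) c).IsHomogeneous (u.degree - v.degree) := by
  refine isHomogeneous_monomial c ?_
  have := map_add Finsupp.degree (u - v) v
  rw [tsub_add_cancel_of_le h] at this
  omega

lemma monomial_one_dvd_iff_forall_le {a : σ →₀ ℕ} {f : MvPolynomial σ R} :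
    monomial a (1 : R) ∣ f ↔ ∀ ν ∈ f.support, a ≤ ν := by
  have := mem_ideal_span_monomial_image (x := f) (s := {a})
  simpa [Ideal.mem_span_singleton] using this

lemma isMinimalRows_replicateCol_monomial {κ : Type*} [Fintype κ] {m : κ → σ →₀ ℕ}
    (hm : Pairwise fun a b => ¬ m a ≤ m b) :
    IsMinimalRows (replicateCol Unit fun a => monomial (m a) (1 : R)) := by
  classical
  intro f hf a
  have h := congrArg (coeff (m a)) (congrFun hf ())
  simp only [vecMul_replicateCol_unit, dotProduct, Pi.zero_apply, coeff_sum, coeff_mul_monomial',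
    coeff_zero] at h
  rwa [Finset.sum_eq_single a (fun b _ hb => if_neg (hm hb)) (by simp), if_pos le_rfl, tsub_self,
    mul_one, ← constantCoeff_eq] at h

lemma monomial_tsub_dvd_of_syzygy {m1 m2 m3 : σ →₀ ℕ} (hdvd : m3 ≤ m1 ⊔ m2)
    {f g h : MvPolynomial σ R}
    (H : f * monomial m1 1 + g * monomial m2 1 + h * monomial m3 1 = 0) :
    monomial (m1 ⊔ m3 - m1) (1 : R) ∣ f := by
  classical
  rw [monomial_one_dvd_iff_forall_le]
  intro ν hν
  have hc := congrArg (coeff (ν + m1)) H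
  rw [coeff_add, coeff_add, coeff_zero, coeff_mul_monomial', coeff_mul_monomial',
    coeff_mul_monomial', if_pos le_add_self, add_tsub_cancel_right, mul_one] at hc
  have key : m3 ≤ ν + m1 := by
    by_contra h3
    rw [if_neg h3, add_zero] at hc
    by_cases h2 : m2 ≤ ν + m1
    · exact h3 (hdvd.trans (sup_le le_add_self h2))
    · rw [if_neg h2, add_zero] at hc
      exact mem_support_iff.mp hν hc
  exact tsub_le_iff_right.mpr (sup_le le_add_self key)

variable (R) in
noncomputable def syzygyMatrix (m1 m2 m3 : σ →₀ ℕ) :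
    Matrix (Fin 2) (Fin 3) (MvPolynomial σ R) :=
  !![monomial (m1 ⊔ m3 - m1) 1, 0, -monomial (m1 ⊔ m3 - m3) 1;
     0, monomial (m2 ⊔ m3 - m2) 1, -monomial (m2 ⊔ m3 - m3) 1]

variable (m1 m2 m3 : σ →₀ ℕ)

lemma isGradedMatrix_syzygyMatrix :
    IsGradedMatrix ![(m1 ⊔ m3).degree, (m2 ⊔ m3).degree] (fun a => (![m1, m2, m3] a).degree)
      (syzygyMatrix R m1 m2 m3) := by
  intro k a
  fin_cases k <;> fin_cases a <;> simp [syzygyMatrix]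
  all_goals refine Or.inr ⟨Finsupp.degree_mono (by simp), ?_⟩
  all_goals first
    | exact isHomogeneous_monomial_tsub (by simp) _
    | exact (isHomogeneous_monomial_tsub (by simp) _).neg

lemma syzygyMatrix_mul_replicateCol :
    syzygyMatrix R m1 m2 m3 * replicateCol Unit (fun a => monomial (![m1, m2, m3] a) (1 : R)) =
      0 := by
  ext k u
  fin_cases k <;> simp [syzygyMatrix, Matrix.mul_apply, Fin.sum_univ_three, monomial_mul] <;>
    rw [tsub_add_cancel_of_le le_sup_left, tsub_add_cancel_of_le le_sup_right, add_neg_cancel]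

lemma vecMul_syzygyMatrix_injective : Function.Injective (· ᵥ* syzygyMatrix R m1 m2 m3) := by
  intro x y hxy
  have h0 := congrFun hxy 0
  have h1 := congrFun hxy 1
  simp only [vecMul, dotProduct, syzygyMatrix, of_apply, cons_val', cons_val_zero,
    cons_val_fin_one, Fin.sum_univ_two, cons_val_one, mul_zero, add_zero,
    monomial_one_mul_cancel_right_iff, zero_add] at h0 h1
  funext i
  fin_cases i
  exacts [h0, h1]

lemma ker_vecMulLinear_replicateCol_monomial (hdvd : m3 ≤ m1 ⊔ m2) :
    LinearMap.ker (replicateCol Unit fun a => monomial (![m1, m2, m3] a) (1 : R)).vecMulLinear =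
      Submodule.span (MvPolynomial σ R) (Set.range (syzygyMatrix R m1 m2 m3)) := by
  apply le_antisymm
  · intro v hv
    have H : v 0 * monomial m1 1 + v 1 * monomial m2 1 + v 2 * monomial m3 1 = 0 := by
      simpa [vecMul_replicateCol_unit, dotProduct, Fin.sum_univ_three] using
        congrFun (LinearMap.mem_ker.mp hv) ()
    obtain ⟨h1, hv0⟩ := monomial_tsub_dvd_of_syzygy hdvd H
    obtain ⟨h2, hv1⟩ := monomial_tsub_dvd_of_syzygy (m1 := m2) (m2 := m1) (f := v 1) (g := v 0)
      (h := v 2)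
      (sup_comm m1 m2 ▸ hdvd) (by rw [← H]; ring)
    have hv2 : v 2 = -(h1 * monomial (m1 ⊔ m3 - m3) 1) - h2 * monomial (m2 ⊔ m3 - m3) 1 := by
      apply (isRegular_one.monomial (m := m3)).right
      have e13 := monomial_tsub_mul_monomial (R := R) (le_sup_left : m1 ≤ m1 ⊔ m3)
      have e31 := monomial_tsub_mul_monomial (R := R) (le_sup_right : m3 ≤ m1 ⊔ m3)
      have e23 := monomial_tsub_mul_monomial (R := R) (le_sup_left : m2 ≤ m2 ⊔ m3)
      have e32 := monomial_tsub_mul_monomial (R := R) (le_sup_right : m3 ≤ m2 ⊔ m3)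
      beta_reduce
      linear_combination H - monomial m1 1 * hv0 - monomial m2 1 * hv1 + h1 * e31 - h1 * e13
        + h2 * e32 - h2 * e23
    refine (Submodule.mem_span_range_iff_exists_fun _).mpr
      ⟨![h1, h2], _root_.funext fun i => ?_⟩
    fin_cases i <;> simp [syzygyMatrix, Fin.sum_univ_two, hv0, hv1, hv2] <;> ring
  · rw [Submodule.span_le]
    rintro _ ⟨k, rfl⟩
    rw [SetLike.mem_coe, LinearMap.mem_ker, vecMulLinear_apply, ← mul_apply_eq_vecMul,
      syzygyMatrix_mul_replicateCol]
    rfl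

end MvPolynomial

namespace MinGradedFreeRes

open MvPolynomial

variable {K : Type*} [Field K] {σ : Type*} {I : Ideal (MvPolynomial σ K)}
  (F : MinGradedFreeRes I)

lemma constantCoeff_d (i : ℕ) (a : Fin (F.rank i)) (b : Fin (F.rank (i + 1))) :
    constantCoeff (F.d i a b) = 0 := by
  rw [constantCoeff_eq]
  exact F.dMinimal i a b

lemma constantCoeff_mulVec_d (i : ℕ) (x : Fin (F.rank (i + 1)) → MvPolynomial σ K)
    (a : Fin (F.rank i)) : constantCoeff ((F.d i *ᵥ x) a) = 0 := by
  simp [mulVec, dotProduct, F.constantCoeff_d]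

lemma span_gen : Ideal.span (Set.range F.gen) = I := by
  have h := F.aug_range
  rwa [sum_proj_smulRight_eq_linearCombination, Fintype.range_linearCombination] at h

lemma range_mulVecLin_d_zero :
    LinearMap.range (F.d 0).mulVecLin = LinearMap.ker (replicateCol Unit F.gen).vecMulLinear := by
  rw [F.exact_aug, sum_proj_smulRight_eq_linearCombination, ker_vecMulLinear_replicateCol_unit]

lemma isGradedMatrix_gen : IsGradedMatrix (F.deg 0) 0 (replicateCol Unit F.gen) :=
  isGradedMatrix_replicateCol F.genHom

lemma isMinimalRows_gen : IsMinimalRows (replicateCol Unit F.gen) := by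
  intro f hf
  obtain ⟨x, rfl⟩ : f ∈ LinearMap.range (F.d 0).mulVecLin := by
    rw [range_mulVecLin_d_zero]
    exact hf
  exact F.constantCoeff_mulVec_d 0 x

lemma isGradedMatrix_transpose_d (i : ℕ) :
    IsGradedMatrix (F.deg (i + 1)) (F.deg i) (F.d i)ᵀ := by
  intro c b
  rcases F.dHom i b c with h0 | hhom
  · exact Or.inl h0
  by_cases hle : F.deg i b ≤ F.deg (i + 1) c
  · exact Or.inr ⟨hle, hhom⟩
  · left
    rw [Nat.sub_eq_zero_of_le (by omega)] at hhom
    rw [transpose_apply, eq_C_constantCoeff_of_isHomogeneous_zero hhom, F.constantCoeff_d,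
      map_zero]

lemma isMinimalRows_transpose_d (i : ℕ) : IsMinimalRows (F.d i)ᵀ := by
  intro f hf
  obtain ⟨x, rfl⟩ : f ∈ LinearMap.range (F.d (i + 1)).mulVecLin := by
    rw [F.exact i, LinearMap.mem_ker, mulVecLin_apply, ← vecMul_transpose]
    exact hf
  exact F.constantCoeff_mulVec_d (i + 1) x

lemma span_range_transpose_d_zero :
    Submodule.span (MvPolynomial σ K) (Set.range (F.d 0)ᵀ) =
      LinearMap.ker (replicateCol Unit F.gen).vecMulLinear := by
  rw [← range_mulVecLin_d_zero]
  change Submodule.span _ (Set.range (F.d 0)ᵀ.row) = _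
  rw [← range_vecMulLinear]
  ext x
  simp

lemma rank_succ_eq_zero_of_ker_eq_top {i : ℕ} (h : LinearMap.ker (F.d i).mulVecLin = ⊤) :
    F.rank (i + 1) = 0 := by
  by_contra hne
  obtain ⟨x, hx⟩ : (fun _ => 1) ∈ LinearMap.range (F.d (i + 1)).mulVecLin := by
    rw [F.exact i, h]
    trivial
  have := F.constantCoeff_mulVec_d (i + 1) x ⟨0, Nat.pos_of_ne_zero hne⟩
  simp_all

lemma rank_add_two_eq_zero (h : Function.Injective (F.d 0).mulVec) (n : ℕ) :
    F.rank (n + 2) = 0 := by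
  induction n with
  | zero =>
    refine F.rank_succ_eq_zero_of_ker_eq_top (LinearMap.ker_eq_top.mpr (LinearMap.ext fun x => ?_))
    have hx : F.d 1 *ᵥ x ∈ LinearMap.ker (F.d 0).mulVecLin :=
      F.exact 0 ▸ LinearMap.mem_range_self _ x
    exact h (by simpa using hx)
  | succ n ih =>
    refine F.rank_succ_eq_zero_of_ker_eq_top (LinearMap.ker_eq_top.mpr ?_)
    ext x a
    exact (Fin.cast ih a).elim0

lemma isGreatest_regSet {r : ℕ} (h0 : ∀ b, F.deg 0 b < r) (h1 : ∀ c, F.deg 1 c ≤ r)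
    (h1' : ∃ c, F.deg 1 c = r) (h2 : ∀ n, F.rank (n + 2) = 0) :
    IsGreatest F.regSet ((r : ℤ) - 1) := by
  refine ⟨?_, ?_⟩
  · obtain ⟨c, hc⟩ := h1'
    exact ⟨1, c, by rw [hc]; push_cast; ring⟩
  · rintro _ ⟨i, b, rfl⟩
    match i, b with
    | 0, b => have := h0 b; omega
    | 1, b => have := h1 b; omega
    | n + 2, b => exact (Fin.cast (h2 n) b).elim0

theorem card_deg_eq_of_free_syzygies {κ ν : Type*} [Fintype κ] [Fintype ν]
    {g : κ → MvPolynomial σ K} {e : κ → ℕ} {S : Matrix ν κ (MvPolynomial σ K)}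
    {s : ν → ℕ} (hg : ∀ k, (g k).IsHomogeneous (e k)) (hgI : Ideal.span (Set.range g) = I)
    (hgmin : IsMinimalRows (replicateCol Unit g)) (hS : IsGradedMatrix s e S)
    (hSinj : Function.Injective (· ᵥ* S))
    (hSspan : Submodule.span (MvPolynomial σ K) (Set.range S) =
      LinearMap.ker (replicateCol Unit g).vecMulLinear) :
    (∀ j, Fintype.card {b // F.deg 0 b = j} = Fintype.card {k // e k = j}) ∧
      (∀ j, Fintype.card {c // F.deg 1 c = j} = Fintype.card {l // s l = j}) ∧
      ∀ n, F.rank (n + 2) = 0 := by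
  have hW := isGradedMatrix_replicateCol hg
  have hspan0 : Submodule.span (MvPolynomial σ K) (Set.range (replicateCol Unit F.gen)) =
      Submodule.span (MvPolynomial σ K) (Set.range (replicateCol Unit g)) := by
    rw [span_range_replicateCol_unit, span_range_replicateCol_unit, F.span_gen, hgI]
  obtain ⟨A, hA, hAW, hAbij⟩ :=
    exists_vecMul_bijective_of_span_eq F.isGradedMatrix_gen hW hspan0 F.isMinimalRows_gen hgmin
  have hC := (F.isGradedMatrix_transpose_d 0).mul hA
  have hCmin := (F.isMinimalRows_transpose_d 0).mul hAbij.1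
  have hspan1 : Submodule.span (MvPolynomial σ K) (Set.range ((F.d 0)ᵀ * A)) =
      Submodule.span (MvPolynomial σ K) (Set.range S) :=
    (span_range_mul_eq_ker hAbij.2 (hAW ▸ F.span_range_transpose_d_zero)).trans hSspan.symm
  refine ⟨card_fiber_eq_of_span_eq F.isGradedMatrix_gen hW hspan0 F.isMinimalRows_gen hgmin,
    card_fiber_eq_of_span_eq hC hS hspan1 hCmin (isMinimalRows_of_injective hSinj),
    F.rank_add_two_eq_zero fun x y hxy => vecMul_injective_of_span_eq hC hS hspan1 hCmin hSinj ?_⟩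
  simp only [← vecMul_vecMul, vecMul_transpose, hxy]

end MinGradedFreeRes

/-- If `I` is minimally generated by three monomials `m1, m2, m3` with
`m3 ∣ lcm (m1, m2)`, then `reg I = max {deg lcm (m1, m3), deg lcm (m2, m3)} - 1`. -/
theorem reg_three_monomial_gens {K : Type*} [Field K] {σ : Type*} (m1 m2 m3 : σ →₀ ℕ)
    (h12 : ¬ m1 ≤ m2) (h21 : ¬ m2 ≤ m1) (h13 : ¬ m1 ≤ m3) (h31 : ¬ m3 ≤ m1)
    (h23 : ¬ m2 ≤ m3) (h32 : ¬ m3 ≤ m2) (hdvd : m3 ≤ m1 ⊔ m2)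
    (I : Ideal (MvPolynomial σ K))
    (hI : I = Ideal.span {monomial m1 (1 : K), monomial m2 (1 : K), monomial m3 (1 : K)}) :
    ∀ F : MinGradedFreeRes I,
      IsGreatest F.regSet
        (max (((m1 ⊔ m3).sum fun _ e => e : ℕ) : ℤ) (((m2 ⊔ m3).sum fun _ e => e : ℕ) : ℤ)
          - 1) := by
  intro F
  have hm : Pairwise fun a b => ¬ ![m1, m2, m3] a ≤ ![m1, m2, m3] b := by
    intro a b hab
    fin_cases a <;> fin_cases b <;> simp_all
  obtain ⟨h0, h1, h2⟩ := F.card_deg_eq_of_free_syzygies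
    (fun a => isHomogeneous_monomial (1 : K) rfl)
    (by rw [hI]; congr 1; ext; simp [Fin.exists_fin_succ, eq_comm])
    (isMinimalRows_replicateCol_monomial hm) (isGradedMatrix_syzygyMatrix m1 m2 m3)
    (vecMul_syzygyMatrix_injective m1 m2 m3)
    (ker_vecMulLinear_replicateCol_monomial m1 m2 m3 hdvd).symm
  have hlt1 := Finsupp.degree_lt_degree (left_lt_sup.mpr h31)
  have hlt2 := Finsupp.degree_lt_degree (left_lt_sup.mpr h32)
  have hlt3 := Finsupp.degree_lt_degree (right_lt_sup.mpr h13)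
  change IsGreatest F.regSet (max ((m1 ⊔ m3).degree : ℤ) ((m2 ⊔ m3).degree : ℤ) - 1)
  rw [← Nat.cast_max]
  refine F.isGreatest_regSet (fun b => ?_) (fun c => ?_) ?_ h2
  · obtain ⟨a, ha⟩ := Fintype.exists_eq_of_card_fiber_eq h0 b
    rw [← ha]
    fin_cases a <;> simp [hlt1, hlt2, hlt3]
  · obtain ⟨k, hk⟩ := Fintype.exists_eq_of_card_fiber_eq h1 c
    rw [← hk]
    fin_cases k <;> simp
  · obtain ⟨k, hk⟩ : ∃ k, ![(m1 ⊔ m3).degree, (m2 ⊔ m3).degree] k =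
        max (m1 ⊔ m3).degree (m2 ⊔ m3).degree := by
      rcases le_total (m1 ⊔ m3).degree (m2 ⊔ m3).degree with h | h
      exacts [⟨1, (max_eq_right h).symm⟩, ⟨0, (max_eq_left h).symm⟩]
    obtain ⟨c, hc⟩ := Fintype.exists_eq_of_card_fiber_eq (fun j => (h1 j).symm) k
    exact ⟨c, hc.trans hk⟩
end

section
/- For n ≥ 5 and k ∈ [(n+1)/2, n−2], the graph L_{n,k} contains an induced subgraph isomorphic to L_{n, n−k+1}, where n − k + 1 ∈ [3, (n+1)/2]. Consequently, a graph G contains no L_{n,k} with k ∈ [3,(n+1)/2] as an induced subgraph if and only if it contains no L_{n,k} with k ∈ [3,n−2] as an induced subgraph. -/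
open MvPolynomial

/-- The `n`-path ideal of a graph `G`: the ideal generated by the products of the
vertices along each path on `n` vertices of `G`. -/
noncomputable def pathIdeal {V : Type*} (K : Type*) [Field K] (G : SimpleGraph V) (n : ℕ) :
    Ideal (MvPolynomial V K) :=
  Ideal.span {f | ∃ p : Fin n → V, Function.Injective p ∧
    (∀ i j : Fin n, (j : ℕ) = (i : ℕ) + 1 → G.Adj (p i) (p j)) ∧
    f = ∏ i, (X (p i) : MvPolynomial V K)}

/-- `G` contains a copy of `H` as an induced subgraph. -/
def ContainsInduced {V W : Type*} (G : SimpleGraph V) (H : SimpleGraph W) : Prop :=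
  Nonempty (H ↪g G)

/-- `P_n + P_n` : the disjoint union of two path graphs on `n` vertices each. -/
def twoPaths (n : ℕ) : SimpleGraph (Fin n ⊕ Fin n) :=
  SimpleGraph.pathGraph n ⊕g SimpleGraph.pathGraph n

/-- The tree `L_{n,m}`: a path `x_1, …, x_n` together with a path `y_1, …, y_{m-1}`
attached to `x_m` at its end `y_{m-1}`.  Vertex `i` for `i < n` is `x_{i+1}`, and
vertex `n + j` for `j < m - 1` is `y_{j+1}`. -/
def Lgraph (n m : ℕ) : SimpleGraph (Fin (n + (m - 1))) :=
  SimpleGraph.fromRel (fun a b =>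
    ((b : ℕ) = (a : ℕ) + 1 ∧ ((b : ℕ) ≤ n - 1 ∨ n ≤ (a : ℕ))) ∨
    ((a : ℕ) = n + m - 2 ∧ (b : ℕ) = m - 1))

/-- `d` is the length of a longest path in `G` (for a tree, its diameter). -/
def IsLongestPathLength {V : Type*} (G : SimpleGraph V) (d : ℕ) : Prop :=
  (∃ (u v : V) (p : G.Walk u v), p.IsPath ∧ p.length = d) ∧
    ∀ (u v : V) (p : G.Walk u v), p.IsPath → p.length ≤ d

theorem ContainsInduced.trans {U V W : Type*} {G : SimpleGraph U} {H : SimpleGraph V}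
    {K : SimpleGraph W} (hGH : ContainsInduced G H) (hHK : ContainsInduced H K) :
    ContainsInduced G K :=
  let ⟨f⟩ := hGH
  let ⟨g⟩ := hHK
  ⟨f.comp g⟩

theorem containsInduced_Lgraph_reflect {n k : ℕ} (hk : n + 1 ≤ 2 * k) (hkn : k < n) :
    ContainsInduced (Lgraph n k) (Lgraph n (n - k + 1)) := by
  -- Reverse the path `x`, which sends `x_{n-k+1}` to `x_k`, and send the arm `y` of
  -- `L_{n,n-k+1}` onto the last `n - k` of the `k - 1` vertices of the arm of `L_{n,k}`.
  let f : Fin (n + (n - k + 1 - 1)) → Fin (n + (k - 1)) := fun v =>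
    ⟨if (v : ℕ) < n then n - 1 - v else v + (2 * k - n - 1), by split <;> omega⟩
  have hf : Function.Injective f := by
    intro a b hab
    have := congrArg Fin.val hab
    simp only [f] at this
    ext
    split at this <;> split at this <;> omega
  refine ⟨⟨⟨f, hf⟩, fun {a b} => ?_⟩⟩
  simp only [Lgraph, SimpleGraph.fromRel_adj, ne_eq, Fin.ext_iff]
  dsimp only [DFunLike.coe, f]
  split <;> split <;> omega

theorem forall_not_containsInduced_Lgraph_iff {V : Type*} (G : SimpleGraph V) (n : ℕ) :
    (∀ k : ℕ, 3 ≤ k → 2 * k ≤ n + 1 → ¬ ContainsInduced G (Lgraph n k)) ↔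
      (∀ k : ℕ, 3 ≤ k → k ≤ n - 2 → ¬ ContainsInduced G (Lgraph n k)) := by
  refine ⟨fun h k hk3 hkn hG => ?_, fun h k hk3 hkn => h k hk3 (by omega)⟩
  by_cases hk : 2 * k ≤ n + 1
  · exact h k hk3 hk hG
  · exact h (n - k + 1) (by omega) (by omega)
      (hG.trans (containsInduced_Lgraph_reflect (by omega) (by omega)))

theorem Lgraph_induced_reflection_general {V : Type*} (G : SimpleGraph V) (n k : ℕ)
    (hk1 : n + 1 ≤ 2 * k) (hk2 : k ≤ n - 2) :
    ContainsInduced (Lgraph n k) (Lgraph n (n - k + 1)) ∧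
    (3 ≤ n - k + 1 ∧ 2 * (n - k + 1) ≤ n + 1) ∧
    ((∀ k' : ℕ, 3 ≤ k' → 2 * k' ≤ n + 1 → ¬ ContainsInduced G (Lgraph n k')) ↔
      (∀ k' : ℕ, 3 ≤ k' → k' ≤ n - 2 → ¬ ContainsInduced G (Lgraph n k'))) :=
  ⟨containsInduced_Lgraph_reflect hk1 (by omega), ⟨by omega, by omega⟩,
    forall_not_containsInduced_Lgraph_iff G n⟩

/-- For `n ≥ 5` and `(n+1)/2 ≤ k ≤ n-2`, `L_{n,k}` contains an induced copy of
`L_{n,n-k+1}` with `n - k + 1 ∈ [3, (n+1)/2]`; consequently, a graph `G` contains no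
induced `L_{n,k}` with `k ∈ [3,(n+1)/2]` iff it contains no induced `L_{n,k}` with
`k ∈ [3, n-2]`. -/
theorem Lgraph_induced_reflection {V : Type*} (G : SimpleGraph V) (n k : ℕ)
    (hn : 5 ≤ n) (hk1 : n + 1 ≤ 2 * k) (hk2 : k ≤ n - 2) :
    ContainsInduced (Lgraph n k) (Lgraph n (n - k + 1)) ∧
    (3 ≤ n - k + 1 ∧ 2 * (n - k + 1) ≤ n + 1) ∧
    ((∀ k' : ℕ, 3 ≤ k' → 2 * k' ≤ n + 1 → ¬ ContainsInduced G (Lgraph n k')) ↔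
      (∀ k' : ℕ, 3 ≤ k' → k' ≤ n - 2 → ¬ ContainsInduced G (Lgraph n k'))) :=
  Lgraph_induced_reflection_general G n k hk1 hk2
end

section
/- Let n ≥ 4 and let G be a tree satisfying the (F_n) condition. Let v_1,…,v_{d+1} be a longest path of G (d = diam(G)), and let trim(G) be the induced subgraph of G on ∪_{i=1}^{d+1} N_G[v_i] (the closed neighborhoods of the path vertices). Then J_n(G) = J_n(trim(G)). -/
open MvPolynomial

/-- The condition `(F_n)` on a tree `G` of diameter `d`: `d ∈ [n-1, 2n-1]` and `G`
contains no induced `P_n + P_n` and no induced forbidden tree (`L_{5,3}` when `n = 4`;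
`L_{n,k}` for `k ∈ [3, n-2]` when `n ≥ 5`). -/
def SatisfiesF {V : Type*} (G : SimpleGraph V) (n d : ℕ) : Prop :=
  IsLongestPathLength G d ∧ n - 1 ≤ d ∧ d ≤ 2 * n - 1 ∧
    ¬ ContainsInduced G (twoPaths n) ∧
    (if n = 4 then ¬ ContainsInduced G (Lgraph 5 3)
     else ∀ k : ℕ, 3 ≤ k → k ≤ n - 2 → ¬ ContainsInduced G (Lgraph n k))

/-- The restriction of `G` to a vertex set `S`: the induced subgraph on `S`, viewed as
a graph on the same vertex type. -/
def restrictTo {V : Type*} (G : SimpleGraph V) (S : Set V) : SimpleGraph V where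
  Adj u v := G.Adj u v ∧ u ∈ S ∧ v ∈ S
  symm := ⟨fun u v h => ⟨h.1.symm, h.2.2, h.2.1⟩⟩
  loopless := ⟨fun v h => G.loopless.irrefl v h.1⟩

/-!
Every path `q` on `n` vertices already lies in the closed neighbourhood `U` of the longest
path `v 0, …, v d`, so both ideals have the same generators. In a tree `U` is convex, so the
indices `j` with `q j ∈ U` form an interval. If it is empty, `q` and `v 0, …, v (n-1)` form an
induced `P_n + P_n`. Otherwise, after reversing `q`, the path ends with a tail
`q a, …, q (n-1)` hanging off some `v m`, with `q (a+1), …` outside `U`. As `v` is longest, the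
tail is shorter than both halves of `v` at `v m`, and every path starting at `v m` has length at
most `max m (d - m)`, so the head `q 0, …, q a` has length at most `max m (d - m) + 1`. Hence
`n ≤ max m (d - m) + (n - 1 - a) + 2`, which leaves exactly enough room for an induced
`L_{n,k}` (or `L_{5,3}`) formed by a window of `v` around `v m` together with the tail.
-/

namespace SimpleGraph

variable {V : Type*} {G : SimpleGraph V}

-- Paths are recorded by their vertex sequences `g 0, …, g N` rather than as walks, so that
-- index bookkeeping is linear arithmetic.
structure IsPathSeq (G : SimpleGraph V) (g : ℕ → V) (N : ℕ) : Prop where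
  adj : ∀ i < N, G.Adj (g i) (g (i + 1))
  injOn : Set.InjOn g (Set.Iic N)

lemma Walk.IsPath.isPathSeq_getVert {u w : V} {p : G.Walk u w} (hp : p.IsPath) :
    G.IsPathSeq p.getVert p.length :=
  ⟨fun _ hi => p.adj_getVert_succ hi, hp.getVert_injOn⟩

lemma IsAcyclic.support_subset_support (hG : G.IsAcyclic) {u w : V} {p : G.Walk u w}
    (hp : p.IsPath) (q : G.Walk u w) : p.support ⊆ q.support := by
  classical
  have : p = q.bypass := congrArg Subtype.val <|
    (hG.subsingleton_path u w).elim ⟨p, hp⟩ ⟨q.bypass, q.bypass_isPath⟩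
  exact this ▸ q.support_bypass_subset_support

namespace IsPathSeq

variable {g : ℕ → V} {N : ℕ}

lemma mono (hg : G.IsPathSeq g N) {M : ℕ} (hM : M ≤ N) : G.IsPathSeq g M :=
  ⟨fun i hi => hg.adj i (by omega), hg.injOn.mono fun _ hi => le_trans hi hM⟩

lemma comp (hg : G.IsPathSeq g N) {e : ℕ → ℕ} {M : ℕ}
    (hstep : ∀ t < M, e (t + 1) = e t + 1 ∨ e t = e (t + 1) + 1)
    (hinj : Set.InjOn e (Set.Iic M)) (hle : ∀ t ≤ M, e t ≤ N) :
    G.IsPathSeq (fun t => g (e t)) M := by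
  refine ⟨fun t ht => ?_, fun s hs t ht hst => hinj hs ht (hg.injOn (hle s hs) (hle t ht) hst)⟩
  rcases hstep t ht with h | h
  · simpa only [h] using hg.adj (e t) (by have := hle (t + 1) ht; omega)
  · simpa only [h] using (hg.adj (e (t + 1)) (by have := hle t ht.le; omega)).symm

lemma comp_add (hg : G.IsPathSeq g N) {a M : ℕ} (h : a + M ≤ N) :
    G.IsPathSeq (fun t => g (a + t)) M :=
  hg.comp (fun _ _ => by omega) (fun _ _ _ _ h => by omega) (fun _ _ => by omega)

lemma comp_sub (hg : G.IsPathSeq g N) {a M : ℕ} (hM : M ≤ a) (ha : a ≤ N) :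
    G.IsPathSeq (fun t => g (a - t)) M :=
  hg.comp (fun _ _ => by omega)
    (fun _ hs _ ht h => by simp only [Set.mem_Iic] at hs ht; omega) (fun _ _ => by omega)

lemma append {x y : ℕ → V} {A B : ℕ} (hx : G.IsPathSeq x A) (hy : G.IsPathSeq y B)
    (hxy : G.Adj (x A) (y 0)) (hne : ∀ i ≤ A, ∀ j ≤ B, x i ≠ y j) :
    G.IsPathSeq (fun t => if t ≤ A then x t else y (t - (A + 1))) (A + 1 + B) := by
  refine ⟨fun t ht => ?_, fun s hs t ht hst => ?_⟩
  · rcases lt_trichotomy t A with h | rfl | h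
    · simpa [h.le, Nat.succ_le_of_lt h] using hx.adj t h
    · simpa using hxy
    · rw [if_neg (by omega), if_neg (by omega), show t + 1 - (A + 1) = t - (A + 1) + 1 by omega]
      exact hy.adj _ (by omega)
  · simp only [Set.mem_Iic] at hs ht
    split_ifs at hst with h₁ h₂ h₂
    · exact hx.injOn h₁ h₂ hst
    · exact absurd hst (hne s h₁ _ (by omega))
    · exact absurd hst.symm (hne t h₂ _ (by omega))
    · have := hy.injOn (show s - (A + 1) ≤ B by omega) (show t - (A + 1) ≤ B by omega) hst
      omega

lemma exists_walk (hg : G.IsPathSeq g N) :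
    ∃ w : G.Walk (g 0) (g N), w.IsPath ∧ w.length = N ∧
      ∀ z, z ∈ w.support ↔ ∃ i ≤ N, z = g i := by
  induction N with
  | zero => exact ⟨.nil, .nil, rfl, fun z => by simp⟩
  | succ N ih =>
    obtain ⟨w, hw, hlen, hsupp⟩ := ih (hg.mono N.le_succ)
    have hnew : g (N + 1) ∉ w.support := fun h => by
      obtain ⟨i, hi, hgi⟩ := (hsupp _).1 h
      have := hg.injOn (show N + 1 ≤ N + 1 from le_rfl) (show i ≤ N + 1 by omega) hgi
      omega
    refine ⟨w.concat (hg.adj N N.lt_succ_self), hw.concat hnew _, by simp [hlen], fun z => ?_⟩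
    rw [Walk.support_concat, List.mem_append, hsupp, List.mem_singleton]
    constructor
    · rintro (⟨i, hi, rfl⟩ | rfl)
      exacts [⟨i, by omega, rfl⟩, ⟨N + 1, le_rfl, rfl⟩]
    · rintro ⟨i, hi, rfl⟩
      rcases Nat.lt_or_ge i (N + 1) with h | h
      exacts [Or.inl ⟨i, by omega, rfl⟩, Or.inr (by rw [show i = N + 1 by omega])]

lemma le_of_isLongestPathLength (hg : G.IsPathSeq g N) {d : ℕ} (hd : IsLongestPathLength G d) :
    N ≤ d := by
  obtain ⟨w, hw, hlen, -⟩ := hg.exists_walk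
  exact hlen ▸ hd.2 _ _ w hw

lemma mem_support (hg : G.IsPathSeq g N) (hG : G.IsAcyclic) {x y : V} (w : G.Walk x y)
    (hx : g 0 = x) (hy : g N = y) {i : ℕ} (hi : i ≤ N) : g i ∈ w.support := by
  subst hx hy
  obtain ⟨p, hp, -, hsupp⟩ := hg.exists_walk
  exact hG.support_subset_support hp w ((hsupp _).2 ⟨i, hi, rfl⟩)

lemma exists_eq_of_endpoints (hg : G.IsPathSeq g N) (hG : G.IsAcyclic) {h : ℕ → V} {M : ℕ}
    (hh : G.IsPathSeq h M) (h0 : g 0 = h 0) (hN : g N = h M) {i : ℕ} (hi : i ≤ N) :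
    ∃ j ≤ M, g i = h j := by
  obtain ⟨w, -, -, hsupp⟩ := hh.exists_walk
  exact (hsupp _).1 (hg.mem_support hG w h0 hN hi)

lemma adj_iff (hg : G.IsPathSeq g N) (hG : G.IsAcyclic) {i j : ℕ} (hi : i ≤ N) (hj : j ≤ N) :
    G.Adj (g i) (g j) ↔ j = i + 1 ∨ i = j + 1 := by
  refine ⟨fun hadj => ?_, ?_⟩
  · wlog hij : i < j generalizing i j
    · have hne : i ≠ j := fun h => hadj.ne (congrArg g h)
      exact (this hj hi hadj.symm (by omega)).symm
    by_contra hfar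
    have hmid := (hg.comp_add (a := i) (M := j - i) (by omega)).mem_support hG
      (.cons hadj .nil) rfl (by congr 1; omega) (i := 1) (by omega)
    simp only [Walk.support_cons, Walk.support_nil, List.mem_cons,
      List.not_mem_nil, or_false] at hmid
    rcases hmid with h | h
    · have := hg.injOn (show i + 1 ≤ N by omega) hi h; omega
    · have := hg.injOn (show i + 1 ≤ N by omega) hj h; omega
  · rintro (rfl | rfl)
    exacts [hg.adj i (by omega), (hg.adj j (by omega)).symm]

lemma eq_of_adj_of_adj (hg : G.IsPathSeq g N) (hG : G.IsAcyclic) {x : V}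
    (hx : ∀ k ≤ N, x ≠ g k) {i j : ℕ} (hi : i ≤ N) (hj : j ≤ N)
    (hix : G.Adj (g i) x) (hjx : G.Adj (g j) x) : i = j := by
  wlog hij : i < j generalizing i j
  · by_contra hne
    exact hne (this hj hi hjx hix (by omega)).symm
  have hp : (Walk.cons hix (.cons hjx.symm .nil)).IsPath := by
    have := hg.injOn.ne hi hj (by omega)
    simp_all [Walk.cons_isPath_iff, hix.ne]
  obtain ⟨w, -, -, hsupp⟩ := (hg.comp_add (a := i) (M := j - i) (by omega)).exists_walk
  have hxw := hG.support_subset_support hp (w.copy (by simp) (by congr 1; omega))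
  simp only [Walk.support_cons, Walk.support_copy] at hxw
  obtain ⟨k, hk, hxk⟩ := (hsupp x).1 (hxw (by simp))
  exact (hx (i + k) (by omega) hxk).elim

end IsPathSeq


section Induced

variable {x y : ℕ → V}

lemma containsInduced_twoPaths (hG : G.IsAcyclic) {n : ℕ} (hx : G.IsPathSeq x (n - 1))
    (hy : G.IsPathSeq y (n - 1)) (hne : ∀ i < n, ∀ j < n, x i ≠ y j)
    (hnadj : ∀ i < n, ∀ j < n, ¬ G.Adj (x i) (y j)) : ContainsInduced G (twoPaths n) := by
  let φ : Fin n ⊕ Fin n → V := Sum.elim (fun i => x i) (fun j => y j)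
  have hle : ∀ i : Fin n, (i : ℕ) ≤ n - 1 := fun i => Nat.le_sub_one_of_lt i.isLt
  refine ⟨⟨⟨φ, ?_⟩, fun {a b} => show G.Adj (φ a) (φ b) ↔ _ from ?_⟩⟩
  · rintro (i | i) (j | j) h <;> simp only [φ, Sum.elim_inl, Sum.elim_inr] at h
    · exact congrArg Sum.inl (Fin.ext (hx.injOn (hle i) (hle j) h))
    · exact absurd h (hne i i.isLt j j.isLt)
    · exact absurd h.symm (hne j j.isLt i i.isLt)
    · exact congrArg Sum.inr (Fin.ext (hy.injOn (hle i) (hle j) h))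
  · rcases a with i | i <;> rcases b with j | j <;>
      simp only [φ, Sum.elim_inl, Sum.elim_inr, twoPaths, sum_adj, pathGraph_adj]
    · rw [hx.adj_iff hG (hle i) (hle j)]; omega
    · exact iff_false_intro (hnadj i i.isLt j j.isLt)
    · exact iff_false_intro fun h => hnadj j j.isLt i i.isLt h.symm
    · rw [hy.adj_iff hG (hle i) (hle j)]; omega

lemma containsInduced_Lgraph (hG : G.IsAcyclic) {N k : ℕ} (hk : 2 ≤ k) (hkN : k ≤ N)
    (hx : G.IsPathSeq x (N - 1)) (hy : G.IsPathSeq y (k - 2)) (hxy : G.Adj (x (k - 1)) (y 0))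
    (hne : ∀ i < N, ∀ j < k - 1, x i ≠ y j)
    (hadj : ∀ i < N, ∀ j < k - 1, G.Adj (x i) (y j) → i = k - 1 ∧ j = 0) :
    ContainsInduced G (Lgraph N k) := by
  have hcross : ∀ i < N, ∀ j < k - 1, G.Adj (x i) (y j) ↔ i = k - 1 ∧ j = 0 :=
    fun i hi j hj => ⟨hadj i hi j hj, by rintro ⟨rfl, rfl⟩; exact hxy⟩
  let φ : Fin (N + (k - 1)) → V := fun a => if (a : ℕ) < N then x a else y (N + k - 2 - a)
  refine ⟨⟨⟨φ, fun a b hab => Fin.ext ?_⟩,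
    fun {a b} => show G.Adj (φ a) (φ b) ↔ _ from ?_⟩⟩
  · have := a.isLt; have := b.isLt
    simp only [φ] at hab
    by_cases ha : (a : ℕ) < N <;> by_cases hb : (b : ℕ) < N <;>
      simp only [ha, hb, if_true, if_false] at hab
    · exact hx.injOn (by omega : (a : ℕ) ≤ N - 1) (by omega : (b : ℕ) ≤ N - 1) hab
    · exact absurd hab (hne a ha _ (by omega))
    · exact absurd hab.symm (hne b hb _ (by omega))
    · have := hy.injOn (show N + k - 2 - a ≤ k - 2 by omega)
        (show N + k - 2 - b ≤ k - 2 by omega) hab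
      omega
  · have := a.isLt; have := b.isLt
    simp only [φ, Lgraph, fromRel_adj, ne_eq, Fin.ext_iff]
    by_cases ha : (a : ℕ) < N <;> by_cases hb : (b : ℕ) < N <;>
      simp only [ha, hb, if_true, if_false]
    · rw [hx.adj_iff hG (by omega) (by omega)]; omega
    · rw [hcross a ha _ (by omega)]; omega
    · rw [G.adj_comm, hcross b hb _ (by omega)]; omega
    · rw [hy.adj_iff hG (by omega) (by omega)]; omega

end Induced

def pathNbhd (G : SimpleGraph V) (v : ℕ → V) (d : ℕ) : Set V :=
  {x | ∃ i ≤ d, x = v i ∨ G.Adj (v i) x}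

section PathNbhd

variable {v q : ℕ → V} {d N : ℕ}

lemma pathNbhd_reverse : G.pathNbhd (fun t => v (d - t)) d = G.pathNbhd v d := by
  ext x
  constructor <;> rintro ⟨i, hi, h⟩ <;> refine ⟨d - i, by omega, ?_⟩
  · exact h
  · simpa only [Nat.sub_sub_self hi] using h

lemma exists_walk_of_mem_pathNbhd (hv : G.IsPathSeq v d) {x : V} (hx : x ∈ G.pathNbhd v d) :
    ∃ w : G.Walk (v 0) x, ∀ z ∈ w.support, z ∈ G.pathNbhd v d := by
  obtain ⟨i, hi, hxi⟩ := hx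
  obtain ⟨w, -, -, hsupp⟩ := (hv.mono hi).exists_walk
  have hw : ∀ z ∈ w.support, z ∈ G.pathNbhd v d := fun z hz => by
    obtain ⟨j, hj, rfl⟩ := (hsupp z).1 hz
    exact ⟨j, by omega, Or.inl rfl⟩
  rcases hxi with rfl | hadj
  · exact ⟨w, hw⟩
  · refine ⟨w.concat hadj, fun z hz => ?_⟩
    rw [Walk.support_concat, List.mem_append, List.mem_singleton] at hz
    rcases hz with hz | rfl
    exacts [hw z hz, ⟨i, hi, Or.inr hadj⟩]

lemma IsPathSeq.mem_pathNbhd_of_ends (hq : G.IsPathSeq q N) (hG : G.IsAcyclic)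
    (hv : G.IsPathSeq v d) (h0 : q 0 ∈ G.pathNbhd v d) (hN : q N ∈ G.pathNbhd v d) {i : ℕ}
    (hi : i ≤ N) : q i ∈ G.pathNbhd v d := by
  obtain ⟨w₀, hw₀⟩ := exists_walk_of_mem_pathNbhd hv h0
  obtain ⟨w, hw⟩ := exists_walk_of_mem_pathNbhd hv hN
  have := hq.mem_support hG (w₀.reverse.append w) rfl rfl hi
  rw [Walk.mem_support_append_iff, Walk.support_reverse, List.mem_reverse] at this
  exact this.elim (hw₀ _) (hw _)

lemma IsPathSeq.exists_last_mem_pathNbhd (hq : G.IsPathSeq q N) (hG : G.IsAcyclic)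
    (hv : G.IsPathSeq v d) {i j : ℕ} (hij : i < j) (hjN : j ≤ N) (hi : q i ∈ G.pathNbhd v d)
    (hj : q j ∉ G.pathNbhd v d) :
    ∃ a < N, q a ∈ G.pathNbhd v d ∧ ∀ t, a < t → t ≤ N → q t ∉ G.pathNbhd v d := by
  classical
  set P : ℕ → Prop := fun t => q t ∈ G.pathNbhd v d
  set a := Nat.findGreatest P N
  have ha : q a ∈ G.pathNbhd v d := Nat.findGreatest_spec (P := P) (by omega) hi
  refine ⟨a, lt_of_le_of_ne (Nat.findGreatest_le N) fun haN => hj ?_, ha,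
    fun t ht htN => Nat.findGreatest_is_greatest (P := P) ht htN⟩
  have hseg := hq.comp_add (a := i) (M := N - i) (by omega)
  simpa [show i + (j - i) = j by omega] using
    hseg.mem_pathNbhd_of_ends hG hv hi (by simpa [show i + (N - i) = N by omega, haN] using ha)
      (i := j - i) (by omega)

end PathNbhd

section LongestPath

variable {v g : ℕ → V} {d m L : ℕ}

lemma IsPathSeq.le_max_of_start (hg : G.IsPathSeq g L) (hG : G.IsAcyclic)
    (hv : G.IsPathSeq v d) (hd : IsLongestPathLength G d) (hm : m ≤ d) (h0 : g 0 = v m) :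
    L ≤ max m (d - m) := by
  rcases Nat.eq_zero_or_pos L with rfl | hL
  · exact Nat.zero_le _
  have htail : G.IsPathSeq (fun t => g (1 + t)) (L - 1) := hg.comp_add (by omega)
  have hadj : G.Adj (v m) (g (1 + 0)) := h0 ▸ hg.adj 0 hL
  have hne : ∀ j ≤ L - 1, g (1 + j) ≠ v m := fun j hj h => by
    have := hg.injOn (show 1 + j ≤ L by omega) (Nat.zero_le L) (h.trans h0.symm); omega
  by_cases hleft : ∀ i < m, ∀ j ≤ L - 1, v i ≠ g (1 + j)
  · have := ((hv.mono hm).append htail hadj fun i hi j hj => ?_).le_of_isLongestPathLength hd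
    · omega
    rcases hi.lt_or_eq with hi | rfl
    exacts [hleft i hi j hj, (hne j hj).symm]
  by_cases hright : ∀ i, m < i → i ≤ d → ∀ j ≤ L - 1, v i ≠ g (1 + j)
  · have hrev : G.IsPathSeq (fun t => v (d - t)) (d - m) := hv.comp_sub (by omega) le_rfl
    have := (hrev.append htail (by rwa [Nat.sub_sub_self hm]) fun i hi j hj => ?_
      ).le_of_isLongestPathLength hd
    · omega
    rcases (show m ≤ d - i by omega).lt_or_eq with hi' | hi'
    exacts [hright _ hi' (by omega) j hj, hi' ▸ (hne j hj).symm]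
  -- `g 1` would lie on the segments of `v` from `v m` to both a left and a right vertex.
  push Not at hleft hright
  obtain ⟨i, hi, j, hj, hij⟩ := hleft
  obtain ⟨i', hi', hi'd, j', hj', hij'⟩ := hright
  obtain ⟨s, hs, hs1⟩ := (hg.mono (show 1 + j ≤ L by omega)).exists_eq_of_endpoints hG
    (hv.comp_sub (a := m) (M := m - i) (by omega) hm) (by simpa using h0)
    (by rw [Nat.sub_sub_self hi.le]; exact hij.symm) (i := 1) (by omega)
  obtain ⟨s', hs', hs'1⟩ := (hg.mono (show 1 + j' ≤ L by omega)).exists_eq_of_endpoints hG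
    (hv.comp_add (a := m) (M := i' - m) (by omega)) (by simpa using h0)
    (by rw [Nat.add_sub_cancel' hi'.le]; exact hij'.symm) (i := 1) (by omega)
  have := hv.injOn (show m - s ≤ d by omega) (show m + s' ≤ d by omega) (hs1.symm.trans hs'1)
  have := hg.injOn (show 1 ≤ L by omega) (Nat.zero_le L)
    (hs1.trans (by rw [show m - s = m by omega, h0]))
  omega

end LongestPath

structure IsPendant (G : SimpleGraph V) (v : ℕ → V) (d m : ℕ) (y : ℕ → V) (c : ℕ) :
    Prop where
  le : m ≤ d
  isPathSeq : G.IsPathSeq y c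
  adj : G.Adj (v m) (y 0)
  start_not_mem : ∀ i ≤ d, y 0 ≠ v i
  not_mem_pathNbhd : ∀ j, 1 ≤ j → j ≤ c → y j ∉ G.pathNbhd v d

namespace IsPendant

variable {v y : ℕ → V} {d m c : ℕ}

lemma reverse (hy : G.IsPendant v d m y c) : G.IsPendant (fun t => v (d - t)) d (d - m) y c where
  le := Nat.sub_le d m
  isPathSeq := hy.isPathSeq
  adj := by simpa only [Nat.sub_sub_self hy.le] using hy.adj
  start_not_mem i hi := hy.start_not_mem (d - i) (Nat.sub_le d i)
  not_mem_pathNbhd := by simpa only [pathNbhd_reverse] using hy.not_mem_pathNbhd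

lemma add_le (hy : G.IsPendant v d m y c) (hv : G.IsPathSeq v d)
    (hd : IsLongestPathLength G d) : m + 1 + c ≤ d := by
  refine ((hv.mono hy.le).append hy.isPathSeq hy.adj fun i hi j hj h => ?_
    ).le_of_isLongestPathLength hd
  rcases Nat.eq_zero_or_pos j with rfl | hj0
  · exact hy.start_not_mem i (by have := hy.le; omega) h.symm
  · exact hy.not_mem_pathNbhd j hj0 hj (h ▸ ⟨i, by have := hy.le; omega, Or.inl rfl⟩)

lemma containsInduced_Lgraph (hy : G.IsPendant v d m y c) (hG : G.IsAcyclic)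
    (hv : G.IsPathSeq v d) {N k : ℕ} (hk : 2 ≤ k) (hkN : k ≤ N) (hkc : k ≤ c + 2)
    (hkm : k ≤ m + 1) (hmN : m + N ≤ d + k) : ContainsInduced G (Lgraph N k) := by
  have hx : G.IsPathSeq (fun i => v (m + 1 - k + i)) (N - 1) := hv.comp_add (by omega)
  have hoff : ∀ i < N, ∀ j < k - 1, v (m + 1 - k + i) ≠ y j := fun i hi j hj h => by
    rcases Nat.eq_zero_or_pos j with rfl | hj0
    · exact hy.start_not_mem _ (by omega) h.symm
    · exact hy.not_mem_pathNbhd j hj0 (by omega) (h ▸ ⟨_, by omega, Or.inl rfl⟩)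
  refine SimpleGraph.containsInduced_Lgraph hG hk hkN hx (hy.isPathSeq.mono (by omega))
    (by simpa [show m + 1 - k + (k - 1) = m by omega] using hy.adj) hoff fun i hi j hj h => ?_
  rcases Nat.eq_zero_or_pos j with rfl | hj0
  · have := hv.eq_of_adj_of_adj hG hy.start_not_mem (by omega) hy.le h hy.adj
    exact ⟨by omega, rfl⟩
  · exact (hy.not_mem_pathNbhd j hj0 (by omega) ⟨_, by omega, Or.inr h⟩).elim

lemma not_satisfiesF (hy : G.IsPendant v d m y c) (hG : G.IsAcyclic) (hv : G.IsPathSeq v d)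
    {n : ℕ} (hn : 4 ≤ n) (hc : 1 ≤ c) (hcrit : n ≤ max m (d - m) + c + 2) :
    ¬ SatisfiesF G n d := by
  rintro ⟨hd, hdn, -, -, hL⟩
  have h₁ := hy.add_le hv hd
  have h₂ := hy.reverse.add_le (hv.comp_sub le_rfl le_rfl) hd
  split_ifs at hL with h4
  · exact hL (hy.containsInduced_Lgraph hG hv (by omega) (by omega) (by omega) (by omega)
      (by omega))
  -- Put the window of `v` on the longer side of `v m`, reversing `v` if needed.
  rcases le_total m (d - m) with hmd | hmd
  · exact hL (max 3 (n - (d - m))) (by omega) (by omega)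
      (hy.containsInduced_Lgraph hG hv (by omega) (by omega) (by omega) (by omega) (by omega))
  · exact hL (max 3 (n - m)) (by omega) (by omega)
      (hy.reverse.containsInduced_Lgraph hG (hv.comp_sub le_rfl le_rfl) (by omega) (by omega)
        (by omega) (by omega) (by omega))

end IsPendant

section Main

variable {v g q : ℕ → V} {d m L n : ℕ}

lemma IsPathSeq.le_max_add_one_of_adj (hg : G.IsPathSeq g L) (hG : G.IsAcyclic)
    (hv : G.IsPathSeq v d) (hd : IsLongestPathLength G d) (hm : m ≤ d) (hadj : G.Adj (v m) (g L))
    (hoff : ∀ i ≤ d, g L ≠ v i) : L ≤ max m (d - m) + 1 := by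
  by_cases hmeet : ∃ i ≤ L, g i = v m
  · obtain ⟨i, hi, hgi⟩ := hmeet
    have hiL : i ≠ L := fun h => hoff m hm (h ▸ hgi)
    have := (hg.adj_iff hG hi le_rfl).1 (hgi ▸ hadj)
    have := (hg.comp_sub (a := i) (M := i) le_rfl hi).le_max_of_start hG hv hd hm
      (by simpa using hgi)
    omega
  · push Not at hmeet
    have hpt : G.IsPathSeq (fun _ => v m) 0 := ⟨fun _ h => absurd h (Nat.not_lt_zero _),
      fun _ h₁ _ h₂ _ => (Nat.le_zero.1 h₁).trans (Nat.le_zero.1 h₂).symm⟩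
    -- the path `v m, g L, g (L - 1), …, g 0`
    have := (hpt.append (hg.comp_sub (a := L) (M := L) le_rfl le_rfl) (by simpa using hadj)
      fun _ _ j hj h => hmeet (L - j) (by omega) h.symm).le_max_of_start hG hv hd hm (by simp)
    omega

lemma IsPathSeq.not_satisfiesF_of_leaves (hq : G.IsPathSeq q (n - 1)) (hG : G.IsAcyclic)
    (hv : G.IsPathSeq v d) (hn : 4 ≤ n) {a : ℕ} (ha : a < n - 1) (hqa : q a ∈ G.pathNbhd v d)
    (hout : ∀ j, a < j → j ≤ n - 1 → q j ∉ G.pathNbhd v d) : ¬ SatisfiesF G n d := by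
  intro hF
  have hoff : ∀ i ≤ d, q a ≠ v i := fun i hi h =>
    hout (a + 1) (by omega) (by omega) ⟨i, hi, Or.inr (h ▸ hq.adj a ha)⟩
  obtain ⟨m, hm, hqm | hadj⟩ := hqa
  · exact hoff m hm hqm
  have htail : G.IsPendant v d m (fun j => q (a + j)) (n - 1 - a) :=
    ⟨hm, hq.comp_add (by omega), hadj, hoff,
      fun j hj hjn => hout (a + j) (by omega) (by omega)⟩
  have hhead := (hq.mono ha.le).le_max_add_one_of_adj hG hv hF.1 hm hadj hoff
  exact htail.not_satisfiesF hG hv hn (by omega) (by omega) hF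

lemma IsPathSeq.mem_pathNbhd (hq : G.IsPathSeq q (n - 1)) (hG : G.IsAcyclic)
    (hv : G.IsPathSeq v d) (hn : 4 ≤ n) (hF : SatisfiesF G n d) {j : ℕ} (hj : j ≤ n - 1) :
    q j ∈ G.pathNbhd v d := by
  by_contra hqj
  by_cases hmeet : ∃ i ≤ n - 1, q i ∈ G.pathNbhd v d
  · obtain ⟨i, hi, hqi⟩ := hmeet
    rcases Nat.lt_or_gt_of_ne (show i ≠ j by rintro rfl; exact hqj hqi) with hij | hij
    · obtain ⟨a, ha, hqa, hout⟩ := hq.exists_last_mem_pathNbhd hG hv hij hj hqi hqj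
      exact hq.not_satisfiesF_of_leaves hG hv hn ha hqa hout hF
    · have hrev := hq.comp_sub (a := n - 1) (M := n - 1) le_rfl le_rfl
      obtain ⟨a, ha, hqa, hout⟩ := hrev.exists_last_mem_pathNbhd hG hv
        (i := n - 1 - i) (j := n - 1 - j) (by omega) (by omega)
        (by rwa [Nat.sub_sub_self hi]) (by rwa [Nat.sub_sub_self hj])
      exact hrev.not_satisfiesF_of_leaves hG hv hn ha hqa hout hF
  · push Not at hmeet
    have hdn : n - 1 ≤ d := hF.2.1
    exact hF.2.2.2.1 (containsInduced_twoPaths hG (hv.mono hdn) hq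
      (fun i hi k hk h => hmeet k (by omega) ⟨i, by omega, Or.inl h.symm⟩)
      (fun i hi k hk h => hmeet k (by omega) ⟨i, by omega, Or.inr h⟩))

end Main

lemma isPathSeq_of_fin {n : ℕ} (hn : 0 < n) {f : Fin n → V}
    (hf : Function.Injective f)
    (hadj : ∀ i j : Fin n, (j : ℕ) = (i : ℕ) + 1 → G.Adj (f i) (f j)) :
    G.IsPathSeq (fun j => f ⟨j % n, Nat.mod_lt j hn⟩) (n - 1) := by
  have hval : ∀ j < n, j % n = j := fun j hj => Nat.mod_eq_of_lt hj
  refine ⟨fun i hi => hadj _ _ ?_, fun i hi j hj h => ?_⟩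
  · simp only [hval i (by omega), hval (i + 1) (by omega)]
  · have := congrArg Fin.val (hf h)
    simp only [hval i (by simp at hi; omega), hval j (by simp at hj; omega)] at this
    exact this

end SimpleGraph

lemma pathIdeal_restrictTo_eq {V : Type*} (K : Type*) [Field K] (G : SimpleGraph V) {n : ℕ}
    {S : Set V} (hS : ∀ f : Fin n → V, Function.Injective f →
      (∀ i j : Fin n, (j : ℕ) = (i : ℕ) + 1 → G.Adj (f i) (f j)) → ∀ i, f i ∈ S) :
    pathIdeal K (restrictTo G S) n = pathIdeal K G n := by
  unfold pathIdeal
  congr 1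
  ext
  constructor
  · rintro ⟨f, hf, hadj, rfl⟩
    exact ⟨f, hf, fun i j hij => (hadj i j hij).1, rfl⟩
  · rintro ⟨f, hf, hadj, rfl⟩
    exact ⟨f, hf, fun i j hij => ⟨hadj i j hij, hS f hf hadj i, hS f hf hadj j⟩, rfl⟩

/-- If `G` is a tree satisfying `(F_n)` (`n ≥ 4`) and `v_1, …, v_{d+1}` is a longest
path, then `J_n(G) = J_n(trim G)`, where `trim G` is the induced subgraph of `G` on
the union of the closed neighbourhoods of the `v_i`. -/
theorem pathIdeal_trim (K : Type*) [Field K] {V : Type*} (G : SimpleGraph V)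
    (hG : G.IsTree) (n d : ℕ) (hn : 4 ≤ n) (hF : SatisfiesF G n d)
    {a b : V} (p : G.Walk a b) (hp : p.IsPath) (hpl : p.length = d) :
    pathIdeal K G n =
      pathIdeal K
        (restrictTo G {v : V | ∃ i ≤ d, v = p.getVert i ∨ G.Adj (p.getVert i) v}) n := by
  have hv : G.IsPathSeq p.getVert d := hpl ▸ hp.isPathSeq_getVert
  refine (pathIdeal_restrictTo_eq K G fun f hf hadj i => ?_).symm
  have := (SimpleGraph.isPathSeq_of_fin (by omega) hf hadj).mem_pathNbhd hG.isAcyclic hv hn hF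
    (j := i) (by omega)
  simp only [Nat.mod_eq_of_lt i.isLt] at this
  exact this
end

section
/- Let G be a caterpillar tree of diameter 2n − 2 (n ≥ 4) with central path x_1,…,x_{2n−3}, containing no induced P_n + P_n. Then x_{n−2} or x_n has no leaf neighbors. -/
open MvPolynomial

/-- A vertex is a leaf if it has exactly one neighbour. -/
def IsLeafVertex {V : Type*} (G : SimpleGraph V) (v : V) : Prop :=
  (G.neighborSet v).ncard = 1

/-- `y` is a leaf neighbour of `v`: a leaf vertex adjacent to `v`. -/
def IsLeafNbr {V : Type*} (G : SimpleGraph V) (v y : V) : Prop :=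
  G.Adj v y ∧ IsLeafVertex G y

/-- `G` is a caterpillar tree with central path `x 1, x 2, …, x m`: the vertices of
degree at least `2` are exactly `x 1, …, x m`, and they form a path. -/
def IsCaterpillarWithCentralPath {V : Type*} (G : SimpleGraph V) (m : ℕ) (x : ℕ → V) : Prop :=
  G.IsTree ∧ Set.InjOn x (Set.Icc 1 m) ∧
    (∀ i : ℕ, 1 ≤ i → i + 1 ≤ m → G.Adj (x i) (x (i + 1))) ∧
    {v : V | 2 ≤ (G.neighborSet v).ncard} = x '' Set.Icc 1 m

/-- `G` is a caterpillar tree: a tree whose vertices of degree at least `2` form a path. -/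
def IsCaterpillar {V : Type*} (G : SimpleGraph V) : Prop :=
  ∃ (m : ℕ) (x : ℕ → V), IsCaterpillarWithCentralPath G m x


/-!
Extend the central path by a neighbour `y` of `x 1` and a neighbour `z` of `x (2n-3)` off the
path. Since `G` is acyclic, `y, x 1, …, x (2n-3), z` is an induced path on `2n - 1` vertices.
Removing its middle vertex `x (n-1)` and hanging the leaf neighbours of `x (n-2)` and `x n` on
the two halves gives two induced paths on `n` vertices with no edge between them.
-/

open Set Function

theorem Set.InjOn.update_insert {α β : Type*} [DecidableEq α] {f : α → β} {s : Set α} {a : α}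
    {b : β} (hf : InjOn f s) (ha : a ∉ s) (hb : b ∉ f '' s) :
    InjOn (update f a b) (insert a s) := by
  have heq : EqOn f (update f a b) s := fun x hx =>
    (update_of_ne (ne_of_mem_of_not_mem hx ha) _ _).symm
  rw [injOn_insert ha, update_self, ← heq.image_eq]
  exact ⟨hf.congr heq, hb⟩

theorem IsLeafNbr.eq_of_adj {V : Type*} {G : SimpleGraph V} {v u w : V} (h : IsLeafNbr G v u)
    (huw : G.Adj u w) : w = v := by
  obtain ⟨c, hc⟩ := Set.ncard_eq_one.1 h.2
  have hw : w ∈ G.neighborSet u := huw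
  have hv : v ∈ G.neighborSet u := h.1.symm
  rw [hc, mem_singleton_iff] at hw hv
  rw [hw, hv]

namespace SimpleGraph

variable {V : Type*} {G : SimpleGraph V}

def IsInducedPath (G : SimpleGraph V) (s : ℕ → V) (n : ℕ) : Prop :=
  InjOn s (Iio n) ∧ ∀ i < n, ∀ j < n, (G.Adj (s i) (s j) ↔ i + 1 = j ∨ j + 1 = i)

namespace IsInducedPath

variable {s : ℕ → V} {n : ℕ}

def embedding (h : IsInducedPath G s n) : pathGraph n ↪g G where
  toFun i := s i
  inj' _ _ hij := Fin.ext (h.1 (Fin.is_lt _) (Fin.is_lt _) hij)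
  map_rel_iff' {i j} := by
    simp only [pathGraph_adj]
    exact h.2 i i.is_lt j j.is_lt

@[simp]
theorem embedding_apply (h : IsInducedPath G s n) (i : Fin n) : h.embedding i = s i := rfl

theorem mono (h : IsInducedPath G s n) {m : ℕ} (hmn : m ≤ n) : IsInducedPath G s m :=
  ⟨h.1.mono (Iio_subset_Iio hmn),
    fun i hi j hj => h.2 i (by omega) j (by omega)⟩

theorem reverse (h : IsInducedPath G s n) : IsInducedPath G (fun i => s (n - 1 - i)) n := by
  refine ⟨fun i hi j hj hij => ?_, fun i hi j hj => ?_⟩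
  · simp only [mem_Iio] at hi hj
    have := h.1 (mem_Iio.2 (by omega)) (mem_Iio.2 (by omega)) hij
    omega
  · rw [h.2 _ (by omega) _ (by omega)]
    omega

theorem injOn_update (h : IsInducedPath G s n) {v : V} (hvs : v ∉ s '' Iio n) :
    InjOn (update s n v) (Iio (n + 1)) := by
  rw [Iio_add_one_eq_Iic, ← Iio_insert]
  exact h.1.update_insert (lt_irrefl n) hvs

theorem apply_ne_of_isLeafNbr (h : IsInducedPath G s n) {p : ℕ} {u : V}
    (hu : IsLeafNbr G (s p) u) (hp : 2 ≤ p) (hpn : p + 3 ≤ n) {i : ℕ} (hi : i < n) : s i ≠ u := by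
  intro hiu
  have next : i + 1 < n → i + 1 = p := fun h' =>
    h.1 h' (mem_Iio.2 (by omega)) (hu.eq_of_adj (hiu ▸ (h.2 i hi _ h').2 (Or.inl rfl)))
  have prev : 1 ≤ i → i - 1 = p := fun h' =>
    h.1 (mem_Iio.2 (by omega)) (mem_Iio.2 (by omega))
      (hu.eq_of_adj (hiu ▸ (h.2 i hi (i - 1) (by omega)).2 (Or.inr (by omega))))
  omega

theorem update_of_isLeafNbr {k : ℕ} {u : V} (h : IsInducedPath G s (k + 1))
    (hu : IsLeafNbr G (s k) u) (hus : ∀ i ≤ k, s i ≠ u) :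
    IsInducedPath G (update s (k + 1) u) (k + 2) := by
  have hadj : ∀ i ≤ k, (G.Adj (s i) u ↔ i = k) := fun i hi =>
    ⟨fun hiu => h.1 (mem_Iio.2 (by omega)) (mem_Iio.2 (by omega)) (hu.eq_of_adj hiu.symm),
      fun hik => hik ▸ hu.1⟩
  refine ⟨h.injOn_update fun ⟨i, hi, hiu⟩ => hus i (Nat.lt_succ_iff.1 hi) hiu,
    fun i hi j hj => ?_⟩
  rcases (show i ≤ k ∨ i = k + 1 by omega) with hik | rfl
  · rcases (show j ≤ k ∨ j = k + 1 by omega) with hjk | rfl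
    · rw [update_of_ne (by omega), update_of_ne (by omega)]
      exact h.2 i (by omega) j (by omega)
    · rw [update_of_ne (by omega), update_self, hadj i hik]
      omega
  · rcases (show j ≤ k ∨ j = k + 1 by omega) with hjk | rfl
    · rw [update_self, update_of_ne (by omega), G.adj_comm, hadj j hjk]
      omega
    · simp only [update_self, SimpleGraph.irrefl, false_iff]
      omega

end IsInducedPath

theorem exists_walk_support_eq_map (s : ℕ → V) (a : ℕ) :
    ∀ l, (∀ k, a ≤ k → k < a + l → G.Adj (s k) (s (k + 1))) →
      ∃ p : G.Walk (s a) (s (a + l)), p.support = (List.range' a (l + 1)).map s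
  | 0, _ => ⟨Walk.nil, by simp⟩
  | l + 1, hadj => by
    obtain ⟨p, hp⟩ := exists_walk_support_eq_map s a l fun k hk hk' => hadj k hk (by omega)
    refine ⟨p.concat (hadj (a + l) (by omega) (by omega)), ?_⟩
    rw [Walk.support_concat, hp, List.range'_1_concat (n := l + 1), List.map_append]
    rfl

theorem IsAcyclic.isInducedPath (hG : G.IsAcyclic) {s : ℕ → V} {n : ℕ} (hinj : InjOn s (Iio n))
    (hadj : ∀ i, i + 1 < n → G.Adj (s i) (s (i + 1))) : IsInducedPath G s n := by
  refine ⟨hinj, fun i hi j hj => ⟨fun h => ?_, ?_⟩⟩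
  · wlog hij : i < j generalizing i j
    · rcases (not_lt.1 hij).lt_or_eq with hji | rfl
      · exact (this j hj i hi h.symm hji).symm
      · exact absurd h (G.irrefl)
    obtain ⟨l, rfl⟩ := Nat.exists_eq_add_of_lt hij
    obtain ⟨p, hp⟩ := exists_walk_support_eq_map s i (l + 1) fun k _ hk => hadj k (by omega)
    have hpath : p.IsPath := by
      rw [Walk.isPath_def, hp]
      refine List.Nodup.map_on (fun a ha b hb hab => hinj ?_ ?_ hab) List.nodup_range'
      · simp only [List.mem_range'_1] at ha; exact mem_Iio.2 (by omega)
      · simp only [List.mem_range'_1] at hb; exact mem_Iio.2 (by omega)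
    have hlen := congrArg (fun q : G.Path _ _ => q.1.length)
      ((hG.subsingleton_path _ _).elim ⟨p, hpath⟩ (Path.singleton h))
    have hsupp := p.length_support
    simp only [hp, List.length_map, List.length_range', Path.singleton_coe, Walk.length_cons,
      Walk.length_nil] at hlen hsupp
    omega
  · rintro (rfl | rfl)
    · exact hadj i hj
    · exact (hadj j hi).symm

theorem IsAcyclic.isInducedPath_update (hG : G.IsAcyclic) {s : ℕ → V} {n : ℕ} {v : V}
    (h : G.IsInducedPath s (n + 1)) (hvs : v ∉ s '' Iio (n + 1)) (hv : G.Adj (s n) v) :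
    G.IsInducedPath (update s (n + 1) v) (n + 2) := by
  refine hG.isInducedPath (h.injOn_update hvs) fun i hi => ?_
  rcases (show i < n ∨ i = n by omega) with hin | rfl
  · rw [update_of_ne (by omega), update_of_ne (by omega)]
    exact (h.2 i (by omega) (i + 1) (by omega)).2 (Or.inl rfl)
  · rwa [update_of_ne (by omega), update_self]

def Embedding.sumElim {W₁ W₂ : Type*} {H₁ : SimpleGraph W₁} {H₂ : SimpleGraph W₂}
    (f : H₁ ↪g G) (g : H₂ ↪g G) (hne : ∀ a b, f a ≠ g b) (hadj : ∀ a b, ¬ G.Adj (f a) (g b)) :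
    H₁ ⊕g H₂ ↪g G where
  toFun := Sum.elim f g
  inj' := by
    rintro (a | a) (b | b) h
    · exact congrArg Sum.inl (f.injective h)
    · exact absurd h (hne a b)
    · exact absurd h.symm (hne b a)
    · exact congrArg Sum.inr (g.injective h)
  map_rel_iff' {a b} := by
    rcases a with a | a <;> rcases b with b | b
    · exact f.map_adj_iff
    · exact iff_of_false (hadj a b) (by simp)
    · exact iff_of_false (fun h => hadj b a h.symm) (by simp)
    · exact g.map_adj_iff

theorem containsInduced_twoPaths_of_isLeafNbr {s : ℕ → V} {k : ℕ} {u w : V} (hk : 2 ≤ k)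
    (hs : IsInducedPath G s (2 * k + 3)) (hu : IsLeafNbr G (s k) u)
    (hw : IsLeafNbr G (s (k + 2)) w) : ContainsInduced G (twoPaths (k + 2)) := by
  have hinj : ∀ i < 2 * k + 3, ∀ j < 2 * k + 3, s i = s j → i = j := fun i hi j hj =>
    hs.1 (mem_Iio.2 hi) (mem_Iio.2 hj)
  have hsu : ∀ i < 2 * k + 3, s i ≠ u := fun i =>
    hs.apply_ne_of_isLeafNbr hu (by omega) (by omega)
  have hsw : ∀ i < 2 * k + 3, s i ≠ w := fun i =>
    hs.apply_ne_of_isLeafNbr hw (by omega) (by omega)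
  have hA := (hs.mono (by omega : k + 1 ≤ 2 * k + 3)).update_of_isLeafNbr hu
    fun i hi => hsu i (by omega)
  have hB := (hs.reverse.mono (by omega : k + 1 ≤ 2 * k + 3)).update_of_isLeafNbr
    (by rwa [show 2 * k + 3 - 1 - k = k + 2 by omega]) fun i hi => hsw _ (by omega)
  -- the two paths are `s 0, …, s k, u` and `s (2k+2), …, s (k+2), w`: their indices along `s`
  -- differ by at least two, and the leaves `u`, `w` only see `s k`, `s (k+2)`
  refine ⟨Embedding.sumElim hA.embedding hB.embedding (fun i j => ?_) (fun i j => ?_)⟩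
  all_goals
    simp only [IsInducedPath.embedding_apply, update_apply]
    have hi := i.is_lt
    have hj := j.is_lt
    by_cases hik : (i : ℕ) = k + 1 <;> by_cases hjk : (j : ℕ) = k + 1 <;>
      simp only [hik, hjk, if_true, if_false]
  · exact fun huw => absurd (hinj _ (by omega) _ (by omega) (hu.eq_of_adj (huw ▸ hw.1.symm)))
      (by omega)
  · exact (hsu _ (by omega)).symm
  · exact hsw _ (by omega)
  · exact fun h => absurd (hinj _ (by omega) _ (by omega) h) (by omega)
  · exact fun huw => hsw k (by omega) (hu.eq_of_adj huw).symm
  · exact fun h => absurd (hinj _ (by omega) _ (by omega) (hu.eq_of_adj h)) (by omega)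
  · exact fun h => absurd (hinj _ (by omega) _ (by omega) (hw.eq_of_adj h.symm)) (by omega)
  · rw [hs.2 _ (by omega) _ (by omega)]
    omega

end SimpleGraph

section Caterpillar

open SimpleGraph

variable {V : Type*} {G : SimpleGraph V} {m : ℕ} {x : ℕ → V}

theorem IsCaterpillarWithCentralPath.isInducedPath (hcat : IsCaterpillarWithCentralPath G m x) :
    G.IsInducedPath (fun i => x (i + 1)) m := by
  refine hcat.1.isAcyclic.isInducedPath (fun i hi j hj h => ?_) fun i hi =>
    hcat.2.2.1 (i + 1) (by omega) (by omega)
  simp only [mem_Iio] at hi hj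
  have := hcat.2.1 (mem_Icc.2 ⟨by omega, by omega⟩) (mem_Icc.2 ⟨by omega, by omega⟩) h
  omega

theorem IsCaterpillarWithCentralPath.exists_adj_notMem_image
    (hcat : IsCaterpillarWithCentralPath G m x) {i j : ℕ} (hi : i ∈ Icc 1 m)
    (hj : ∀ l ∈ Icc 1 m, G.Adj (x i) (x l) → l = j) :
    ∃ y, G.Adj (x i) y ∧ y ∉ x '' Icc 1 m := by
  have hdeg : x i ∈ {v | 2 ≤ (G.neighborSet v).ncard} := hcat.2.2.2 ▸ mem_image_of_mem x hi
  obtain ⟨y, hy, hyj⟩ := exists_ne_of_one_lt_ncard hdeg (x j)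
  exact ⟨y, hy, fun ⟨l, hl, hly⟩ => hyj (hly ▸ congrArg x (hj l hl (hly ▸ hy)))⟩

theorem IsCaterpillarWithCentralPath.exists_isInducedPath
    (hcat : IsCaterpillarWithCentralPath G m x) (hm : 2 ≤ m) :
    ∃ s, G.IsInducedPath s (m + 2) ∧ EqOn s x (Icc 1 m) := by
  have hG := hcat.1.isAcyclic
  have hc := hcat.isInducedPath
  obtain ⟨y, hy, hyx⟩ := hcat.exists_adj_notMem_image (j := 2) ⟨le_rfl, by omega⟩ (by
    rintro l ⟨hl, hlm⟩ h
    obtain ⟨l, rfl⟩ := Nat.exists_eq_add_of_le' hl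
    have := (hc.2 0 (by omega) l (by omega)).1 h
    omega)
  obtain ⟨z, hz, hzx⟩ := hcat.exists_adj_notMem_image (j := m - 1) ⟨by omega, le_rfl⟩ (by
    rintro l ⟨hl, hlm⟩ h
    obtain ⟨l, rfl⟩ := Nat.exists_eq_add_of_le' hl
    have := (hc.2 (m - 1) (by omega) l (by omega)).1
      (show G.Adj (x (m - 1 + 1)) _ by rwa [Nat.sub_add_cancel (by omega)])
    omega)
  have ht : G.IsInducedPath (update x 0 y) (m + 1) := by
    refine hG.isInducedPath ?_ fun i hi => ?_
    · rw [show Iio (m + 1) = insert 0 (Icc 1 m) by ext; simp; omega]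
      exact hcat.2.1.update_insert (by simp) hyx
    · rcases i with _ | i
      · simpa using hy.symm
      · simpa using hcat.2.2.1 (i + 1) (by omega) (by omega)
  have hzt : z ∉ update x 0 y '' Iio (m + 1) := by
    rintro ⟨_ | i, hi, rfl⟩
    · have := (ht.2 m (by omega) 0 (by omega)).1 (by rwa [update_of_ne (by omega), update_self])
      omega
    · exact hzx ⟨i + 1, ⟨by omega, by simp at hi; omega⟩, by simp⟩
  refine ⟨_, hG.isInducedPath_update ht hzt (by rwa [update_of_ne (by omega)]),
    fun i hi => ?_⟩
  simp only [mem_Icc] at hi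
  rw [update_of_ne (by omega), update_of_ne (by omega)]

end Caterpillar

theorem caterpillar_diam_even_leaf_free_general {V : Type*} (G : SimpleGraph V) (n : ℕ)
    (hn : 4 ≤ n) (x : ℕ → V) (hcat : IsCaterpillarWithCentralPath G (2 * n - 3) x)
    (hP : ¬ ContainsInduced G (twoPaths n)) :
    (∀ v : V, ¬ IsLeafNbr G (x (n - 2)) v) ∨ (∀ v : V, ¬ IsLeafNbr G (x n) v) := by
  obtain ⟨k, rfl⟩ : ∃ k, n = k + 2 := ⟨n - 2, by omega⟩
  obtain ⟨s, hs, hsx⟩ := hcat.exists_isInducedPath (by omega)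
  rw [show 2 * (k + 2) - 3 + 2 = 2 * k + 3 by omega] at hs
  rw [Nat.add_sub_cancel, ← hsx ⟨by omega, by omega⟩, ← hsx ⟨by omega, by omega⟩]
  by_contra! h
  obtain ⟨⟨u, hu⟩, ⟨w, hw⟩⟩ := h
  exact hP (SimpleGraph.containsInduced_twoPaths_of_isLeafNbr (by omega) hs hu hw)

/-- Let `G` be a caterpillar tree of diameter `2n - 2` (`n ≥ 4`) with central path
`x 1, …, x (2n-3)`, containing no induced `P_n + P_n`.  Then `x (n-2)` or `x n` has no
leaf neighbours. -/
theorem caterpillar_diam_even_leaf_free {V : Type*} (G : SimpleGraph V) (n : ℕ)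
    (hn : 4 ≤ n) (x : ℕ → V) (hcat : IsCaterpillarWithCentralPath G (2 * n - 3) x)
    (hd : IsLongestPathLength G (2 * n - 2))
    (hP : ¬ ContainsInduced G (twoPaths n)) :
    (∀ v : V, ¬ IsLeafNbr G (x (n - 2)) v) ∨ (∀ v : V, ¬ IsLeafNbr G (x n) v) :=
  caterpillar_diam_even_leaf_free_general G n hn x hcat hP
end
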